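/- arXiv:math/0611790 — 9 statements merged into one kernel-verified Lean document; each statement's English description precedes it below -/
import Mathlib

section
/- Let R be a commutative ring with identity and let p0, p11, p12, p21, p22 be elements of R such that p0 divides p11·p22, p21 divides p11·p12, and p12 divides p21·p22. Set p1 = p11 + p12 and p2 = p21 + p22. Then the radical of the ideal (p0, p1, p2) equals the radical of the ideal (p0, p11, p12, p21, p22). -/
/-- **Proposition 1 (Barile).** Let `R` be a commutative ring with identity and let
`p0, p11, p12, p21, p22 ∈ R` be such that `p0` divides `p11 * p22`, `p21` divides
`p11 * p12`, and `p12` divides `p21 * p22`.  Set `p1 = p11 + p12` and `p2 = p21 + p22`.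
Then `√(p0, p1, p2) = √(p0, p11, p12, p21, p22)`. -/
theorem radical_span_three_eq_radical_span_five {R : Type*} [CommRing R]
    (p0 p11 p12 p21 p22 : R)
    (h0 : p0 ∣ p11 * p22) (h21 : p21 ∣ p11 * p12) (h12 : p12 ∣ p21 * p22) :
    (Ideal.span {p0, p11 + p12, p21 + p22}).radical =
      (Ideal.span {p0, p11, p12, p21, p22}).radical := by
  obtain ⟨c, hc⟩ := h0
  obtain ⟨a, ha⟩ := h21
  obtain ⟨b, hb⟩ := h12
  set I : Ideal R := Ideal.span {p0, p11 + p12, p21 + p22} with hI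
  have hp0 : p0 ∈ I := Ideal.subset_span (by simp)
  have hp1 : p11 + p12 ∈ I := Ideal.subset_span (by simp)
  have hp2 : p21 + p22 ∈ I := Ideal.subset_span (by simp)
  have hA : p12 * p22 ∈ I := by
    have : p12 * p22 = (p11 + p12) * (p21 + p22) - (p11 + p12) * p21 - p0 * c := by
      rw [← hc]; ring
    rw [this]
    exact sub_mem (sub_mem (Ideal.mul_mem_right _ _ hp1) (Ideal.mul_mem_right _ _ hp1))
      (Ideal.mul_mem_right _ _ hp0)
  have hB : p21 * p12 ∈ I := by
    have : p21 * p12 = p12 * (p21 + p22) - p12 * p22 := by ring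
    rw [this]
    exact sub_mem (Ideal.mul_mem_left _ _ hp2) hA
  have h12r : p12 ∈ I.radical := by
    refine ⟨3, ?_⟩
    have : p12 ^ 3 = (p11 + p12) * p12 ^ 2 - (p21 * p12) * a := by
      linear_combination -p12 * ha
    rw [this]
    exact sub_mem (Ideal.mul_mem_right _ _ hp1) (Ideal.mul_mem_right _ _ hB)
  have h21r : p21 ∈ I.radical := by
    refine ⟨3, ?_⟩
    have : p21 ^ 3 = (p21 + p22) * p21 ^ 2 - (p21 * p12) * b := by
      linear_combination -p21 * hb
    rw [this]
    exact sub_mem (Ideal.mul_mem_right _ _ hp2) (Ideal.mul_mem_right _ _ hB)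
  have hIrad : I ≤ I.radical := Ideal.le_radical
  have h11r : p11 ∈ I.radical := by
    have : p11 = (p11 + p12) - p12 := by ring
    rw [this]; exact sub_mem (hIrad hp1) h12r
  have h22r : p22 ∈ I.radical := by
    have : p22 = (p21 + p22) - p21 := by ring
    rw [this]; exact sub_mem (hIrad hp2) h21r
  apply le_antisymm
  · apply Ideal.radical_mono
    rw [Ideal.span_le]
    intro x hx
    simp only [Set.mem_insert_iff, Set.mem_singleton_iff] at hx
    rcases hx with rfl | rfl | rfl
    · exact Ideal.subset_span (by simp)
    · exact add_mem (Ideal.subset_span (by simp)) (Ideal.subset_span (by simp))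
    · exact add_mem (Ideal.subset_span (by simp)) (Ideal.subset_span (by simp))
  · have : Ideal.span {p0, p11, p12, p21, p22} ≤ I.radical := by
      rw [Ideal.span_le]
      intro x hx
      simp only [Set.mem_insert_iff, Set.mem_singleton_iff] at hx
      rcases hx with rfl | rfl | rfl | rfl | rfl
      · exact hIrad hp0
      · exact h11r
      · exact h12r
      · exact h21r
      · exact h22r
    calc (Ideal.span {p0, p11, p12, p21, p22}).radical ≤ I.radical.radical :=
          Ideal.radical_mono this
      _ = I.radical := Ideal.radical_idem _
end

section
/- Let R be a commutative ring with identity, let P be a finite subset of R, and let P0, …, Pr be subsets of P such that: (i) the union of P0, …, Pr is P; (ii) P0 has exactly one element; (iii) whenever p and p'' are distinct elements of Pi for some i with 0 < i ≤ r, there exist an index i' with 0 ≤ i' < i and an element p' ∈ P_{i'} such that the product p·p'' lies in the ideal generated by p'. For each p ∈ P let e(p) ≥ 1 be an integer, and for each i = 0, …, r set q_i = Σ_{p ∈ P_i} p^{e(p)}. Then the radical of the ideal generated by P equals the radical of the ideal (q_0, …, q_r). -/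
/-- **Lemma (Schmitt–Vogel).** Let `R` be a commutative ring with identity, `P` a finite
subset of `R`, and `P₀, …, Pᵣ` subsets of `P` such that:
(i) `⋃ᵢ Pᵢ = P`; (ii) `P₀` has exactly one element; (iii) if `p` and `p''` are distinct
elements of `Pᵢ` (`0 < i ≤ r`) there are an index `i' < i` and an element `p' ∈ P_{i'}`
with `p * p'' ∈ (p')`.  For each `p ∈ P` let `e p ≥ 1` be an integer, and set
`qᵢ = ∑_{p ∈ Pᵢ} p ^ (e p)`.  Then `√(P) = √(q₀, …, qᵣ)`. -/
theorem schmitt_vogel {R : Type*} [CommRing R] (r : ℕ) (P : Finset R)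
    (Ps : Fin (r + 1) → Finset R)
    (hsub : ∀ i, Ps i ⊆ P)
    (hcover : ∀ p ∈ P, ∃ i, p ∈ Ps i)
    (hcard : (Ps 0).card = 1)
    (hiii : ∀ i : Fin (r + 1), 0 < i → ∀ p ∈ Ps i, ∀ p'' ∈ Ps i, p ≠ p'' →
      ∃ i' : Fin (r + 1), i' < i ∧ ∃ p' ∈ Ps i', p * p'' ∈ Ideal.span {p'})
    (e : R → ℕ) (he : ∀ p ∈ P, 1 ≤ e p) :
    (Ideal.span (P : Set R)).radical =
      (Ideal.span (Set.range fun i : Fin (r + 1) => ∑ p ∈ Ps i, p ^ e p)).radical := by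
  classical
  set J := Ideal.span (Set.range fun i : Fin (r + 1) => ∑ p ∈ Ps i, p ^ e p) with hJ
  have hq : ∀ i : Fin (r + 1), (∑ p ∈ Ps i, p ^ e p) ∈ J := fun i =>
    Ideal.subset_span ⟨i, rfl⟩
  have key : ∀ n : ℕ, ∀ i : Fin (r + 1), i.val ≤ n → ∀ p ∈ Ps i, p ∈ J.radical := by
    intro n
    induction n with
    | zero =>
      intro i hi p hp
      have h0 : i.val = 0 := Nat.le_zero.mp hi
      have hi0 : i = 0 := Fin.ext (by simp [h0])
      subst hi0
      obtain ⟨a, ha⟩ := Finset.card_eq_one.mp hcard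
      rw [ha, Finset.mem_singleton] at hp
      subst hp
      exact ⟨e p, by simpa [ha] using hq 0⟩
    | succ n ih =>
      intro i hi p hp
      rcases Nat.lt_or_ge i.val (n + 1) with h | h
      · exact ih i (by omega) p hp
      · have hiv : i.val = n + 1 := by omega
        have hipos : (0 : Fin (r + 1)) < i := by
          rw [Fin.lt_def]; simp [hiv]
        have h1 : p * ∑ p' ∈ Ps i, p' ^ e p' ∈ J.radical :=
          Ideal.mul_mem_left _ _ (Ideal.le_radical (hq i))
        have h2 : ∀ p'' ∈ Ps i, p'' ≠ p → p * p'' ^ e p'' ∈ J.radical := by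
          intro p'' hp'' hne
          obtain ⟨i', hi', p', hp', hmem⟩ := hiii i hipos p hp p'' hp'' (Ne.symm hne)
          have hp'rad : p' ∈ J.radical := by
            refine ih i' ?_ p' hp'
            have := Fin.lt_def.mp hi'
            omega
          obtain ⟨c, hc⟩ := Ideal.mem_span_singleton'.mp hmem
          have he'' := he p'' (hsub i hp'')
          have heq : p * p'' ^ e p'' = (c * p'' ^ (e p'' - 1)) * p' := by
            have : p'' ^ e p'' = p'' * p'' ^ (e p'' - 1) := by
              rw [← pow_succ']; congr 1; omega
            rw [this, ← mul_assoc, ← hc]; ring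
          rw [heq]
          exact Ideal.mul_mem_left _ _ hp'rad
        have hsum : p * ∑ p' ∈ Ps i, p' ^ e p' =
            p ^ (e p + 1) + ∑ p'' ∈ (Ps i).erase p, p * p'' ^ e p'' := by
          rw [Finset.mul_sum, ← Finset.add_sum_erase _ _ hp, pow_succ']
        have h3 : (∑ p'' ∈ (Ps i).erase p, p * p'' ^ e p'') ∈ J.radical :=
          Ideal.sum_mem _ fun p'' hp'' =>
            h2 p'' (Finset.mem_of_mem_erase hp'') (Finset.ne_of_mem_erase hp'')
        have h4 : p ^ (e p + 1) ∈ J.radical := by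
          have := Ideal.sub_mem _ h1 h3
          rw [hsum] at this
          simpa using this
        exact Ideal.mem_radical_of_pow_mem h4
  apply le_antisymm
  · have hle : Ideal.span (P : Set R) ≤ J.radical := by
      rw [Ideal.span_le]
      intro p hp
      obtain ⟨i, hi⟩ := hcover p hp
      exact key r i i.is_le p hi
    calc (Ideal.span (P : Set R)).radical ≤ (J.radical).radical :=
          Ideal.radical_mono hle
      _ = J.radical := Ideal.radical_idem _
  · apply Ideal.radical_mono
    rw [Ideal.span_le]
    rintro _ ⟨i, rfl⟩
    refine Ideal.sum_mem _ fun p hp => ?_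
    have h1 : p ∈ Ideal.span (P : Set R) := Ideal.subset_span (hsub i hp)
    have h2 : p ^ e p = p ^ (e p - 1) * p := by
      rw [← pow_succ]; congr 1; have := he p (hsub i hp); omega
    rw [h2]
    exact Ideal.mul_mem_left _ _ h1
end

section
/- Let R be a commutative ring with identity and let p0, p11, p12, p21, p22 be elements of R such that p0 divides p11·p22 and p21 divides p11·p12. Set p1 = p11 + p12 and p2 = p21 + p22. Then p11^3 lies in the ideal (p0, p1, p2); in particular p11 belongs to the radical of (p0, p1, p2). -/
/-- If `p0` divides `p11 * p22` and `p21` divides `p11 * p12`, and `p1 = p11 + p12`,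
`p2 = p21 + p22`, then `p11 ^ 3 ∈ (p0, p1, p2)`; in particular `p11 ∈ √(p0, p1, p2)`. -/
theorem cube_mem_span_and_mem_radical {R : Type*} [CommRing R]
    (p0 p11 p12 p21 p22 : R)
    (h0 : p0 ∣ p11 * p22) (h21 : p21 ∣ p11 * p12) :
    p11 ^ 3 ∈ Ideal.span {p0, p11 + p12, p21 + p22} ∧
      p11 ∈ (Ideal.span {p0, p11 + p12, p21 + p22}).radical := by
  obtain ⟨c, hc⟩ := h0
  obtain ⟨d, hd⟩ := h21
  have key : p11 ^ 3 = (d * c) * p0 + p11 ^ 2 * (p11 + p12) + (-(d * p11)) * (p21 + p22) := by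
    linear_combination (-p11) * hd + d * hc
  have hmem : p11 ^ 3 ∈ Ideal.span {p0, p11 + p12, p21 + p22} := by
    rw [key]
    refine Ideal.add_mem _ (Ideal.add_mem _ ?_ ?_) ?_
    · exact Ideal.mul_mem_left _ _ (Ideal.subset_span (by simp))
    · exact Ideal.mul_mem_left _ _ (Ideal.subset_span (by simp))
    · exact Ideal.mul_mem_left _ _ (Ideal.subset_span (by simp))
  exact ⟨hmem, ⟨3, hmem⟩⟩
end

section
/- Let K be a field, R = K[x1,…,x5], and let I be the ideal of R generated by the monomials x1x3, x1x4, x2x4, x2x5, x3x5. Then the arithmetical rank of I equals 3; that is, there exist 3 elements of R generating an ideal whose radical equals the radical of I, and no fewer than 3 elements of R have this property. -/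
/-!
The variable `xᵢ` is `X (i - 1)`.

The elements `x₁x₃`, `x₁x₄ + x₂x₅`, `x₂x₄ + x₃x₅` generate `I` up to radical: the squares of
`x₁x₄` and `x₂x₄` lie in the ideal they generate, hence so do powers of `x₂x₅` and `x₃x₅`, which
differ from the last two generators by `x₁x₄` and `x₂x₄`.

Conversely, by Krull's height theorem an ideal with the same radical as `I` needs at least
`height I` generators. A prime containing `I` contains the variables of a vertex cover of the
pentagon `x₁ – x₃ – x₅ – x₂ – x₄ – x₁`, so at least three variables, and the ideals generated by
`0, 1, …, k` of the variables form a strict chain of primes; hence `height I ≥ 3`.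
-/

open MvPolynomial

namespace MvPolynomial

variable {σ R : Type*} [CommRing R]

theorem span_X_image_eq_ker (s : Set σ) [DecidablePred (· ∈ s)] :
    Ideal.span (X '' s : Set (MvPolynomial σ R)) =
      RingHom.ker (aeval fun i => if i ∈ s then 0 else (X i : MvPolynomial σ R)) := by
  set φ : MvPolynomial σ R →ₐ[R] MvPolynomial σ R := aeval fun i => if i ∈ s then 0 else X i
  set π := Ideal.Quotient.mkₐ R (Ideal.span (X '' s : Set (MvPolynomial σ R)))
  have hπφ : π.comp φ = π := by
    refine algHom_ext fun i => ?_
    by_cases hi : i ∈ s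
    · simpa [φ, hi, π, eq_comm (a := (0 : _ ⧸ _)), Ideal.Quotient.eq_zero_iff_mem] using
        Ideal.subset_span (Set.mem_image_of_mem (X : σ → MvPolynomial σ R) hi)
    · simp [φ, hi]
  refine le_antisymm (Ideal.span_le.mpr ?_) fun p hp => ?_
  · rintro _ ⟨i, hi, rfl⟩
    simp [φ, hi]
  · rw [← Ideal.Quotient.eq_zero_iff_mem]
    simpa [π, RingHom.mem_ker.mp hp] using congr($hπφ p).symm

theorem isPrime_span_X_image [IsDomain R] (s : Set σ) :
    (Ideal.span (X '' s : Set (MvPolynomial σ R))).IsPrime := by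
  classical
  rw [span_X_image_eq_ker]
  exact RingHom.ker_isPrime _

theorem X_notMem_span_X_image [Nontrivial R] {s : Set σ} {i : σ} (hi : i ∉ s) :
    (X i : MvPolynomial σ R) ∉ Ideal.span (X '' s) := by
  simp only [mem_ideal_span_X_image, support_X, Finset.mem_singleton, forall_eq, not_exists,
    not_and, not_not]
  exact fun j hj => Finsupp.single_eq_of_ne (ne_of_mem_of_not_mem hj hi)

theorem card_le_height_span_X_image [IsDomain R] (s : Finset σ) :
    (s.card : ℕ∞) ≤ (Ideal.span (X '' s : Set (MvPolynomial σ R))).height := by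
  classical
  induction s using Finset.induction with
  | empty => simp
  | insert i s hi ih =>
    have := isPrime_span_X_image (R := R) (s : Set σ)
    have := isPrime_span_X_image (R := R) ((insert i s : Finset σ) : Set σ)
    have hlt : Ideal.span (X '' s : Set (MvPolynomial σ R)) <
        Ideal.span (X '' (insert i s : Finset σ)) :=
      SetLike.lt_iff_le_and_exists.mpr ⟨Ideal.span_mono (Set.image_mono (by simp)), X i,
        Ideal.subset_span ⟨i, by simp, rfl⟩, X_notMem_span_X_image hi⟩
    calc ((insert i s).card : ℕ∞) = s.card + 1 := by simp [hi]
      _ ≤ _ := by gcongr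
      _ ≤ _ := Ideal.height_add_one_le_of_lt_of_isPrime hlt

theorem card_le_height_of_forall_X_mem [IsDomain R] (s : Finset σ) {P : Ideal (MvPolynomial σ R)}
    (hP : ∀ i ∈ s, X i ∈ P) : (s.card : ℕ∞) ≤ P.height :=
  (card_le_height_span_X_image s).trans <| Ideal.height_mono <| Ideal.span_le.mpr <| by
    rintro _ ⟨i, hi, rfl⟩
    exact hP i hi

end MvPolynomial

theorem Ideal.height_le_of_radical_span_range_eq {R : Type*} [CommRing R] [IsNoetherianRing R]
    {I : Ideal R} (hI : I ≠ ⊤) {n : ℕ} (f : Fin n → R)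
    (h : (Ideal.span (Set.range f)).radical = I.radical) : I.height ≤ n := by
  have hJ : Ideal.span (Set.range f) ≠ ⊤ := by
    intro htop
    rw [htop, Ideal.radical_top, eq_comm, Ideal.radical_eq_top] at h
    exact hI h
  calc I.height = (Ideal.span (Set.range f)).height := by
        simp only [Ideal.height, ← Ideal.radical_minimalPrimes (I := I), ← h,
          Ideal.radical_minimalPrimes]
    _ ≤ (Ideal.span (Set.range f)).spanFinrank := Ideal.height_le_spanFinrank _ hJ
    _ ≤ n := by
        rw [← Set.image_univ]
        exact_mod_cast (Submodule.spanFinrank_span_le_ncard_of_finite (Set.toFinite _)).trans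
          ((Set.ncard_image_le (Set.toFinite _)).trans (by simp))

namespace Pentagon

variable (K : Type*) [Field K]

noncomputable abbrev edgeIdeal : Ideal (MvPolynomial (Fin 5) K) :=
  Ideal.span {X 0 * X 2, X 0 * X 3, X 1 * X 3, X 1 * X 4, X 2 * X 4}

theorem edgeIdeal_ne_top : edgeIdeal K ≠ ⊤ := by
  refine ne_top_of_le_ne_top (RingHom.ker_ne_top (constantCoeff (σ := Fin 5) (R := K))) ?_
  rw [Ideal.span_le]
  rintro _ (rfl | rfl | rfl | rfl | rfl) <;> simp

theorem three_le_card_of_isVertexCover (s : Finset (Fin 5)) (h02 : 0 ∈ s ∨ 2 ∈ s)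
    (h03 : 0 ∈ s ∨ 3 ∈ s) (h13 : 1 ∈ s ∨ 3 ∈ s) (h14 : 1 ∈ s ∨ 4 ∈ s) (h24 : 2 ∈ s ∨ 4 ∈ s) :
    3 ≤ s.card := by
  revert s
  decide

theorem three_le_height_edgeIdeal : 3 ≤ (edgeIdeal K).height := by
  classical
  rw [Ideal.height_eq_inf_minimalPrimes]
  refine le_iInf₂ fun P hP => ?_
  set s := Finset.univ.filter fun i => (X i : MvPolynomial (Fin 5) K) ∈ P
  have hcover : ∀ i j : Fin 5, (X i * X j : MvPolynomial (Fin 5) K) ∈ edgeIdeal K →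
      i ∈ s ∨ j ∈ s := by
    intro i j hij
    simpa [s] using hP.1.1.mem_or_mem (hP.1.2 hij)
  have hcard : (3 : ℕ∞) ≤ s.card := by
    exact_mod_cast three_le_card_of_isVertexCover s
      (hcover _ _ (Ideal.subset_span (by simp))) (hcover _ _ (Ideal.subset_span (by simp)))
      (hcover _ _ (Ideal.subset_span (by simp))) (hcover _ _ (Ideal.subset_span (by simp)))
      (hcover _ _ (Ideal.subset_span (by simp)))
  exact hcard.trans (card_le_height_of_forall_X_mem s fun i hi => by simpa [s] using hi)

theorem radical_span_three_eq_radical_edgeIdeal :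
    (Ideal.span (Set.range
      ![(X 0 * X 2 : MvPolynomial (Fin 5) K), X 0 * X 3 + X 1 * X 4, X 1 * X 3 + X 2 * X 4])).radical =
      (edgeIdeal K).radical := by
  set J := Ideal.span (Set.range
    ![(X 0 * X 2 : MvPolynomial (Fin 5) K), X 0 * X 3 + X 1 * X 4, X 1 * X 3 + X 2 * X 4])
  have hJ : ∀ i, ![(X 0 * X 2 : MvPolynomial (Fin 5) K), X 0 * X 3 + X 1 * X 4,
      X 1 * X 3 + X 2 * X 4] i ∈ J :=
    fun i => Ideal.subset_span ⟨i, rfl⟩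
  have h03 : X 0 * X 3 ∈ J.radical := ⟨2, Ideal.mem_span_range_iff_exists_fun.mpr
    ⟨![X 4 ^ 2, X 0 * X 3, -(X 0 * X 4)], by simp [Fin.sum_univ_three]; ring⟩⟩
  have h13 : X 1 * X 3 ∈ J.radical := ⟨2, Ideal.mem_span_range_iff_exists_fun.mpr
    ⟨![X 3 ^ 2, -(X 2 * X 3), X 1 * X 3], by simp [Fin.sum_univ_three]; ring⟩⟩
  refine le_antisymm (Ideal.radical_le_radical_iff.mpr ?_) (Ideal.radical_le_radical_iff.mpr ?_)
  · rw [Ideal.span_le]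
    rintro _ ⟨i, rfl⟩
    refine Ideal.le_radical ?_
    fin_cases i
    · exact Ideal.subset_span (by simp)
    · exact Ideal.add_mem _ (Ideal.subset_span (by simp)) (Ideal.subset_span (by simp))
    · exact Ideal.add_mem _ (Ideal.subset_span (by simp)) (Ideal.subset_span (by simp))
  · rw [Ideal.span_le]
    rintro _ (rfl | rfl | rfl | rfl | rfl)
    · exact Ideal.le_radical (hJ 0)
    · exact h03
    · exact h13
    · simpa using J.radical.sub_mem (Ideal.le_radical (hJ 1)) h03
    · simpa using J.radical.sub_mem (Ideal.le_radical (hJ 2)) h13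

end Pentagon

/-- **Example 2 (Barile).** In `R = K[x₁,…,x₅]`, the ideal
`I = (x₁x₃, x₁x₄, x₂x₄, x₂x₅, x₃x₅)` has arithmetical rank `3`: there are `3` elements
of `R` generating an ideal with the same radical as `I`, and no fewer elements do so.
(The variables `x₁,…,x₅` are `X 0, …, X 4`.) -/
theorem ara_pentagon_eq_three (K : Type*) [Field K] :
    (∃ f : Fin 3 → MvPolynomial (Fin 5) K,
      (Ideal.span (Set.range f)).radical =
        (Ideal.span ({X 0 * X 2, X 0 * X 3, X 1 * X 3, X 1 * X 4, X 2 * X 4} :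
          Set (MvPolynomial (Fin 5) K))).radical) ∧
    ∀ (n : ℕ) (f : Fin n → MvPolynomial (Fin 5) K),
      (Ideal.span (Set.range f)).radical =
        (Ideal.span ({X 0 * X 2, X 0 * X 3, X 1 * X 3, X 1 * X 4, X 2 * X 4} :
          Set (MvPolynomial (Fin 5) K))).radical → 3 ≤ n := by
  refine ⟨⟨_, Pentagon.radical_span_three_eq_radical_edgeIdeal K⟩, fun n f hf => ?_⟩
  exact_mod_cast (Pentagon.three_le_height_edgeIdeal K).trans
    (Ideal.height_le_of_radical_span_range_eq (Pentagon.edgeIdeal_ne_top K) f hf)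
end

section
/- Let K be a field and R = K[x1,…,x6]. Then the radical of the ideal of R generated by the three polynomials x3x5, x3x6 + x2x4, x4x6 + x2x5 equals the ideal generated by the five monomials x3x5, x3x6, x2x4, x4x6, x2x5. -/
/-!
Monomial ideals generated by squarefree monomials are radical: if `f ^ n` lies in such an ideal,
drop the terms of `f` already in it; the remainder `g` still has `g ^ n` in the ideal, but the
leading monomial of `g ^ n` (over a reduced ring) is the `n`-th power of that of `g`, and a
squarefree monomial dividing `xᵃⁿ` already divides `xᵃ`. The five monomials form such an ideal;
it contains the three given generators, and each of the five monomials has its square in the ideal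
they generate.
-/

open MvPolynomial

theorem Finsupp.le_of_le_nsmul_of_le_one {σ : Type*} {t m : σ →₀ ℕ} {n : ℕ}
    (ht : ∀ i, t i ≤ 1) (h : t ≤ n • m) : t ≤ m := by
  intro i
  have hi := h i
  simp only [Finsupp.smul_apply, smul_eq_mul] at hi
  rcases Nat.eq_zero_or_pos (m i) with h0 | h0
  · simp_all
  · exact (ht i).trans h0

namespace MvPolynomial

variable {σ R : Type*}

theorem support_sum_monomial_subset [CommSemiring R] (s : Finset (σ →₀ ℕ))
    (c : (σ →₀ ℕ) → R) : (∑ m ∈ s, monomial m (c m)).support ⊆ s := by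
  classical
  intro m hm
  obtain ⟨m', hm', hm_mem⟩ := Finset.mem_biUnion.1 (support_sum hm)
  rwa [Finset.mem_singleton.1 (support_monomial_subset hm_mem)]

theorem isRadical_span_monomial_image [CommRing R] [IsReduced R] [LinearOrder σ]
    [WellFoundedGT σ] {s : Set (σ →₀ ℕ)} (hs : ∀ t ∈ s, ∀ i, t i ≤ 1) :
    (Ideal.span ((fun t => monomial t (1 : R)) '' s)).IsRadical := by
  classical
  rintro f ⟨n, hfn⟩
  set I := Ideal.span ((fun t => monomial t (1 : R)) '' s)
  let covered (m : σ →₀ ℕ) : Prop := ∃ t ∈ s, t ≤ m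
  let g := ∑ m ∈ f.support with ¬ covered m, monomial m (f.coeff m)
  have hfg : f - g ∈ I := by
    have hf : f = ∑ m ∈ f.support with covered m, monomial m (f.coeff m) + g := by
      rw [Finset.sum_filter_add_sum_filter_not, support_sum_monomial_coeff]
    rw [hf, add_sub_cancel_right]
    exact mem_ideal_span_monomial_image.2 fun m hm =>
      (Finset.mem_filter.1 (support_sum_monomial_subset _ _ hm)).2
  have hgn : g ^ n ∈ I := by
    obtain ⟨q, hq⟩ := sub_dvd_pow_sub_pow f g n
    rw [show g ^ n = f ^ n - (f - g) * q by rw [← hq]; ring]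
    exact I.sub_mem hfn (I.mul_mem_right q hfg)
  suffices g = 0 by simpa [this] using hfg
  by_contra hg
  let o : MonomialOrder σ := .lex
  have hlead : n • o.degree g ∈ (g ^ n).support := by
    rw [mem_support_iff, o.coeff_pow_nsmul_degree]
    exact fun h => o.leadingCoeff_ne_zero_iff.2 hg (IsReduced.eq_zero _ ⟨n, h⟩)
  obtain ⟨t, ht, hle⟩ := mem_ideal_span_monomial_image.1 hgn _ hlead
  have hg_uncovered := (Finset.mem_filter.1 (support_sum_monomial_subset _ _
    (o.degree_mem_support hg))).2
  exact hg_uncovered ⟨t, ht, Finsupp.le_of_le_nsmul_of_le_one (hs t ht) hle⟩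

theorem X_mul_X_eq_monomial [CommSemiring R] (i j : σ) :
    (X i * X j : MvPolynomial σ R) = monomial (Finsupp.single i 1 + Finsupp.single j 1) 1 := by
  rw [X, X, monomial_mul, one_mul]

theorem isRadical_span_X_mul_X [CommRing R] [IsReduced R] [LinearOrder σ] [WellFoundedGT σ]
    {E : Set (σ × σ)} (hE : ∀ e ∈ E, e.1 ≠ e.2) :
    (Ideal.span ((fun e => X e.1 * X e.2 : σ × σ → MvPolynomial σ R) '' E)).IsRadical := by
  simp_rw [X_mul_X_eq_monomial]
  rw [← Set.image_image (fun t => monomial t (1 : R))]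
  refine isRadical_span_monomial_image ?_
  rintro _ ⟨e, he, rfl⟩ i
  have := hE e he
  simp only [Finsupp.add_apply, Finsupp.single_apply]
  split_ifs <;> simp_all

end MvPolynomial

theorem Ideal.mem_radical_span_triple_of_sq_eq {R : Type*} [CommSemiring R] {a b c x : R}
    (p q r : R) (h : x ^ 2 = p * a + q * b + r * c) : x ∈ (Ideal.span {a, b, c}).radical := by
  refine ⟨2, h ▸ Ideal.add_mem _ (Ideal.add_mem _ ?_ ?_) ?_⟩ <;>
    exact Ideal.mul_mem_left _ _ (Ideal.subset_span (by simp))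

/-- The variables `x₁,…,x₆` are `X 0, …, X 5`. -/
theorem radical_three_eq_span_five (K : Type*) [Field K] :
    (Ideal.span ({X 2 * X 4, X 2 * X 5 + X 1 * X 3, X 3 * X 5 + X 1 * X 4} :
        Set (MvPolynomial (Fin 6) K))).radical =
      Ideal.span ({X 2 * X 4, X 2 * X 5, X 1 * X 3, X 3 * X 5, X 1 * X 4} :
        Set (MvPolynomial (Fin 6) K)) := by
  set J := Ideal.span ({X 2 * X 4, X 2 * X 5, X 1 * X 3, X 3 * X 5, X 1 * X 4} :
    Set (MvPolynomial (Fin 6) K))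
  have hJ : J.IsRadical := by
    have hJ_edges : J = Ideal.span ((fun e => X e.1 * X e.2 : Fin 6 × Fin 6 → _) ''
        {(2, 4), (2, 5), (1, 3), (3, 5), (1, 4)}) := by
      simp [J, Set.image_insert_eq]
    exact hJ_edges ▸ isRadical_span_X_mul_X (by decide)
  refine le_antisymm (hJ.radical_le_iff.2 (Ideal.span_le.2 ?_)) (Ideal.span_le.2 ?_)
  · simp only [Set.insert_subset_iff, Set.singleton_subset_iff, SetLike.mem_coe]
    exact ⟨Ideal.subset_span (by simp),
      J.add_mem (Ideal.subset_span (by simp)) (Ideal.subset_span (by simp)),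
      J.add_mem (Ideal.subset_span (by simp)) (Ideal.subset_span (by simp))⟩
  · simp only [Set.insert_subset_iff, Set.singleton_subset_iff, SetLike.mem_coe]
    refine ⟨Ideal.le_radical (Ideal.subset_span (by simp)), ?_, ?_, ?_, ?_⟩
    · exact Ideal.mem_radical_span_triple_of_sq_eq (X 1 ^ 2) (X 2 * X 5) (-(X 1 * X 2)) (by ring)
    · exact Ideal.mem_radical_span_triple_of_sq_eq (X 1 ^ 2) (X 1 * X 3) (-(X 1 * X 2)) (by ring)
    · exact Ideal.mem_radical_span_triple_of_sq_eq (X 5 ^ 2) (-(X 4 * X 5)) (X 3 * X 5) (by ring)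
    · exact Ideal.mem_radical_span_triple_of_sq_eq (X 5 ^ 2) (-(X 4 * X 5)) (X 1 * X 4) (by ring)
end

section
/- Let m ≥ 2 be an integer, K a field, and R = K[x1,…,x_{3m+3}]. Let I_m be the ideal of R generated by the monomials r1 = x1x2 together with, for n = 1,…,m, s_n = x_{3n−2}x_{3n+2}, t_n = x_{3n+1}x_{3n+3}, u_n = x_{3n+1}x_{3n+2}, v_n = x_{3n−1}x_{3n+3}. Let J_m be the ideal of R generated by the 2m+1 elements x1x2 and, for n = 1,…,m, s_n + t_n and u_n + v_n. Then I_m equals the radical of J_m. -/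
set_option linter.unusedSectionVars false


open MvPolynomial AddMonoidAlgebra

section SqfreeRadical

variable {σ : Type*} [LinearOrder σ] {K : Type*} [Field K]

private lemma toLex_inj' : Function.Injective (toLex : (σ →₀ ℕ) → Lex (σ →₀ ℕ)) :=
  toLex.injective

private lemma invFun_toLex :
    (Function.invFun (toLex : (σ →₀ ℕ) → Lex (σ →₀ ℕ))) = ofLex := by
  funext x
  exact toLex_inj' (Function.rightInverse_invFun toLex.surjective x)

private lemma hadd' : ∀ a b : (σ →₀ ℕ),
    (toLex (a + b) : Lex (σ →₀ ℕ)) = toLex a + toLex b := fun _ _ => rfl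

private lemma lc_eq_coeff (p : MvPolynomial σ K) :
    AddMonoidAlgebra.leadingCoeff (toLex : (σ →₀ ℕ) → Lex (σ →₀ ℕ)) p
      = MvPolynomial.coeff (ofLex (AddMonoidAlgebra.supDegree toLex p)) p := by
  rw [AddMonoidAlgebra.leadingCoeff, invFun_toLex]
  rfl

private lemma coeff_pow_lead (p : MvPolynomial σ K) (hp : p ≠ 0) :
    ∀ k, 1 ≤ k →
    AddMonoidAlgebra.supDegree (toLex : (σ →₀ ℕ) → Lex (σ →₀ ℕ)) (p ^ k)
        = toLex (k • ofLex (AddMonoidAlgebra.supDegree toLex p)) ∧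
      AddMonoidAlgebra.leadingCoeff (toLex : (σ →₀ ℕ) → Lex (σ →₀ ℕ)) (p ^ k)
        = (AddMonoidAlgebra.leadingCoeff (toLex : (σ →₀ ℕ) → Lex (σ →₀ ℕ)) p) ^ k := by
  intro k hk
  induction k, hk using Nat.le_induction with
  | base => simp
  | succ n hn ih =>
    have hlc : AddMonoidAlgebra.leadingCoeff (toLex : (σ →₀ ℕ) → Lex (σ →₀ ℕ)) p ≠ 0 :=
      (AddMonoidAlgebra.leadingCoeff_ne_zero toLex_inj').2 hp
    have hpn : p ^ n ≠ 0 := pow_ne_zero _ hp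
    have hmul : AddMonoidAlgebra.leadingCoeff (toLex : (σ →₀ ℕ) → Lex (σ →₀ ℕ)) (p ^ n) *
        AddMonoidAlgebra.leadingCoeff (toLex : (σ →₀ ℕ) → Lex (σ →₀ ℕ)) p ≠ 0 := by
      rw [ih.2]
      exact mul_ne_zero (pow_ne_zero _ hlc) hlc
    constructor
    · rw [pow_succ,
        AddMonoidAlgebra.supDegree_mul toLex_inj' hadd' hmul hpn hp, ih.1, succ_nsmul, hadd']
      rfl
    · rw [pow_succ, AddMonoidAlgebra.leadingCoeff_mul toLex_inj' hadd', ih.2, pow_succ]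

/-- An ideal generated by squarefree monomials is radical. -/
lemma isRadical_span_sqfree (S : Set (σ →₀ ℕ)) (hS : ∀ s ∈ S, ∀ i, s i ≤ 1) :
    (Ideal.span ((fun s => MvPolynomial.monomial s (1 : K)) '' S)).IsRadical := by
  classical
  set I := Ideal.span ((fun s => MvPolynomial.monomial s (1 : K)) '' S) with hIdef
  rintro x ⟨k, hxk⟩
  rcases Nat.eq_zero_or_pos k with rfl | hk
  · have h1 : (1 : MvPolynomial σ K) ∈ I := by simpa using hxk
    exact (Ideal.eq_top_iff_one I).2 h1 ▸ Submodule.mem_top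
  suffices H : ∀ N (p : MvPolynomial σ K), p.support.card ≤ N → p ^ k ∈ I → p ∈ I from
    H _ x le_rfl hxk
  intro N
  induction N with
  | zero =>
    intro p hcard _
    have : p.support = ∅ := Finset.card_eq_zero.1 (Nat.le_zero.1 hcard)
    have : p = 0 := by
      rwa [MvPolynomial.support_eq_empty] at this
    simp [this]
  | succ N ih =>
    intro p hcard hpk
    by_cases hp : p = 0
    · simp [hp]
    set d : σ →₀ ℕ := ofLex (AddMonoidAlgebra.supDegree toLex p) with hddef
    have hd : d ∈ p.support := by
      have := AddMonoidAlgebra.supDegree_mem_support (p := p)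
        (D := (toLex : (σ →₀ ℕ) → Lex (σ →₀ ℕ))) toLex_inj' hp
      rwa [invFun_toLex] at this
    by_cases hgood : ∃ s ∈ S, s ≤ d
    · obtain ⟨s, hs, hsd⟩ := hgood
      have hcd : MvPolynomial.coeff d p ≠ 0 := MvPolynomial.mem_support_iff.1 hd
      have hmono : (MvPolynomial.monomial d (MvPolynomial.coeff d p) : MvPolynomial σ K) ∈ I := by
        rw [hIdef, MvPolynomial.mem_ideal_span_monomial_image]
        intro xi hxi
        rw [MvPolynomial.support_monomial, if_neg hcd, Finset.mem_singleton] at hxi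
        exact ⟨s, hs, hxi ▸ hsd⟩
      set q : MvPolynomial σ K := p - MvPolynomial.monomial d (MvPolynomial.coeff d p) with hqdef
      have hqk : q ^ k ∈ I := by
        have h1 : Ideal.Quotient.mk I q = Ideal.Quotient.mk I p :=
          Ideal.Quotient.eq.2 (by
            have : q - p = -(MvPolynomial.monomial d (MvPolynomial.coeff d p)) := by
              rw [hqdef]; ring
            rw [this]; exact I.neg_mem hmono)
        have h2 : Ideal.Quotient.mk I (q ^ k) = Ideal.Quotient.mk I (p ^ k) := by
          rw [map_pow, map_pow, h1]
        rw [Ideal.Quotient.eq] at h2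
        have : q ^ k = (q ^ k - p ^ k) + p ^ k := by ring
        rw [this]
        exact I.add_mem h2 hpk
      have hsub : q.support ⊆ p.support.erase d := by
        intro e he
        rw [Finset.mem_erase]
        have hne : e ≠ d := by
          intro h
          apply MvPolynomial.mem_support_iff.1 he
          rw [h, hqdef, MvPolynomial.coeff_sub, MvPolynomial.coeff_monomial, if_pos rfl, sub_self]
        refine ⟨hne, ?_⟩
        rw [MvPolynomial.mem_support_iff] at he ⊢
        rwa [hqdef, MvPolynomial.coeff_sub, MvPolynomial.coeff_monomial, if_neg (Ne.symm hne),
          sub_zero] at he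
      have hcard' : q.support.card ≤ N := by
        have h1 := Finset.card_le_card hsub
        have h2 := Finset.card_erase_of_mem hd
        omega
      have hq : q ∈ I := ih q hcard' hqk
      have : p = q + MvPolynomial.monomial d (MvPolynomial.coeff d p) := by
        rw [hqdef]; ring
      rw [this]
      exact I.add_mem hq hmono
    · exfalso
      have hlead := coeff_pow_lead p hp k hk
      have hcoeff : MvPolynomial.coeff (k • d) (p ^ k) = (MvPolynomial.coeff d p) ^ k := by
        have h1 := lc_eq_coeff (p ^ k)
        rw [hlead.1] at h1
        have h2 : (ofLex (toLex (k • d)) : σ →₀ ℕ) = k • d := rfl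
        rw [h2] at h1
        rw [← h1, hlead.2, lc_eq_coeff]
      have hne : MvPolynomial.coeff (k • d) (p ^ k) ≠ 0 := by
        rw [hcoeff]
        exact pow_ne_zero _ (MvPolynomial.mem_support_iff.1 hd)
      rw [hIdef, MvPolynomial.mem_ideal_span_monomial_image] at hpk
      obtain ⟨s, hs, hsd⟩ := hpk _ (MvPolynomial.mem_support_iff.2 hne)
      refine hgood ⟨s, hs, ?_⟩
      intro i
      have h1 : s i ≤ k * d i := by
        have := hsd i
        simpa using this
      have h3 := hS s hs i
      rcases Nat.eq_zero_or_pos (d i) with h | h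
      · rw [h, Nat.mul_zero] at h1
        omega
      · omega
end SqfreeRadical




/-- The variable `x k` (1-based indexing) of `K[x₁,…,x_{3m+3}]`; by convention it is `0`
for an out-of-range index `k` (all indices used below are in range). -/
noncomputable def xv (m : ℕ) (K : Type*) [Field K] (k : ℕ) :
    MvPolynomial (Fin (3 * m + 3)) K :=
  if h : 1 ≤ k ∧ k ≤ 3 * m + 3 then MvPolynomial.X ⟨k - 1, by omega⟩ else 0

/-- The generating set of the ideal `I_m`: the monomials `r₁ = x₁x₂` together with, for
`n = 1, …, m`, `sₙ = x_{3n-2}x_{3n+2}`, `tₙ = x_{3n+1}x_{3n+3}`, `uₙ = x_{3n+1}x_{3n+2}`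
and `vₙ = x_{3n-1}x_{3n+3}`. -/
noncomputable def ImGens (m : ℕ) (K : Type*) [Field K] :
    Set (MvPolynomial (Fin (3 * m + 3)) K) :=
  {xv m K 1 * xv m K 2} ∪
    ⋃ n ∈ Set.Icc 1 m,
      ({xv m K (3 * n - 2) * xv m K (3 * n + 2),
        xv m K (3 * n + 1) * xv m K (3 * n + 3),
        xv m K (3 * n + 1) * xv m K (3 * n + 2),
        xv m K (3 * n - 1) * xv m K (3 * n + 3)} :
        Set (MvPolynomial (Fin (3 * m + 3)) K))

/-- The generating set of the ideal `J_m`: the `2m + 1` elements `x₁x₂` and, for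
`n = 1, …, m`, `sₙ + tₙ` and `uₙ + vₙ`. -/
noncomputable def JmGens (m : ℕ) (K : Type*) [Field K] :
    Set (MvPolynomial (Fin (3 * m + 3)) K) :=
  {xv m K 1 * xv m K 2} ∪
    ⋃ n ∈ Set.Icc 1 m,
      ({xv m K (3 * n - 2) * xv m K (3 * n + 2) + xv m K (3 * n + 1) * xv m K (3 * n + 3),
        xv m K (3 * n + 1) * xv m K (3 * n + 2) + xv m K (3 * n - 1) * xv m K (3 * n + 3)} :
        Set (MvPolynomial (Fin (3 * m + 3)) K))


section Example4

open MvPolynomial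

/-- Exponent vector of the variable `x k` (1-based). -/
noncomputable def evv (m : ℕ) (k : ℕ) : Fin (3 * m + 3) →₀ ℕ :=
  if h : 1 ≤ k ∧ k ≤ 3 * m + 3 then Finsupp.single ⟨k - 1, by omega⟩ 1 else 0

lemma xv_mul (m : ℕ) (K : Type*) [Field K] {a b : ℕ}
    (ha : 1 ≤ a ∧ a ≤ 3 * m + 3) (hb : 1 ≤ b ∧ b ≤ 3 * m + 3) :
    xv m K a * xv m K b = MvPolynomial.monomial (evv m a + evv m b) (1 : K) := by
  rw [xv, xv, evv, evv, dif_pos ha, dif_pos hb, dif_pos ha, dif_pos hb]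
  have hX : ∀ i : Fin (3 * m + 3),
      (MvPolynomial.X i : MvPolynomial (Fin (3 * m + 3)) K)
        = MvPolynomial.monomial (Finsupp.single i 1) 1 := fun i => rfl
  rw [hX, hX, MvPolynomial.monomial_mul, one_mul]

lemma evv_sqfree (m : ℕ) {a b : ℕ} (ha : 1 ≤ a) (ha' : a ≤ 3 * m + 3)
    (hb : 1 ≤ b) (hb' : b ≤ 3 * m + 3) (hab : a ≠ b) :
    ∀ i, (evv m a + evv m b) i ≤ 1 := by
  intro i
  rw [evv, evv, dif_pos ⟨ha, ha'⟩, dif_pos ⟨hb, hb'⟩, Finsupp.add_apply,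
    Finsupp.single_apply, Finsupp.single_apply]
  split_ifs with h1 h2
  · exfalso
    have := congrArg Fin.val (h1.trans h2.symm)
    simp only at this
    omega
  · omega
  · omega
  · omega

/-- The set of exponent vectors of the generators of `I_m`. -/
def SIm (m : ℕ) : Set (Fin (3 * m + 3) →₀ ℕ) :=
  {evv m 1 + evv m 2} ∪
    ⋃ n ∈ Set.Icc 1 m,
      ({evv m (3 * n - 2) + evv m (3 * n + 2),
        evv m (3 * n + 1) + evv m (3 * n + 3),
        evv m (3 * n + 1) + evv m (3 * n + 2),
        evv m (3 * n - 1) + evv m (3 * n + 3)} : Set _)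

lemma ImGens_eq (m : ℕ) (K : Type*) [Field K] :
    ImGens m K = (fun s => MvPolynomial.monomial s (1 : K)) '' SIm m := by
  rw [ImGens, SIm, Set.image_union, Set.image_singleton]
  congr 1
  · rw [xv_mul m K ⟨by omega, by omega⟩ ⟨by omega, by omega⟩]
  · rw [Set.image_iUnion₂]
    apply Set.iUnion_congr
    intro n
    apply Set.iUnion_congr
    intro hn
    obtain ⟨h1, h2⟩ := Set.mem_Icc.1 hn
    rw [Set.image_insert_eq, Set.image_insert_eq, Set.image_insert_eq, Set.image_singleton]
    rw [xv_mul m K ⟨by omega, by omega⟩ ⟨by omega, by omega⟩,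
      xv_mul m K ⟨by omega, by omega⟩ ⟨by omega, by omega⟩,
      xv_mul m K ⟨by omega, by omega⟩ ⟨by omega, by omega⟩,
      xv_mul m K ⟨by omega, by omega⟩ ⟨by omega, by omega⟩]

lemma Im_isRadical (m : ℕ) (K : Type*) [Field K] :
    (Ideal.span (ImGens m K)).IsRadical := by
  rw [ImGens_eq]
  apply isRadical_span_sqfree
  rintro s (hs | hs)
  · rw [Set.mem_singleton_iff] at hs
    subst hs
    exact evv_sqfree m (by omega) (by omega) (by omega) (by omega) (by omega)
  · simp only [Set.mem_iUnion, Set.mem_Icc] at hs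
    obtain ⟨n, ⟨h1, h2⟩, hs⟩ := hs
    rcases hs with rfl | rfl | rfl | rfl
    · exact evv_sqfree m (by omega) (by omega) (by omega) (by omega) (by omega)
    · exact evv_sqfree m (by omega) (by omega) (by omega) (by omega) (by omega)
    · exact evv_sqfree m (by omega) (by omega) (by omega) (by omega) (by omega)
    · exact evv_sqfree m (by omega) (by omega) (by omega) (by omega) (by omega)

lemma FG_mem (m : ℕ) (K : Type*) [Field K] {n : ℕ} (h1 : 1 ≤ n) (h2 : n ≤ m) :
    (xv m K (3 * n - 2) * xv m K (3 * n + 2) + xv m K (3 * n + 1) * xv m K (3 * n + 3)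
        ∈ Ideal.span (JmGens m K)) ∧
      (xv m K (3 * n + 1) * xv m K (3 * n + 2) + xv m K (3 * n - 1) * xv m K (3 * n + 3)
        ∈ Ideal.span (JmGens m K)) := by
  constructor <;>
    refine Ideal.subset_span (Set.mem_union_right _
      (Set.mem_biUnion (Set.mem_Icc.2 ⟨h1, h2⟩) ?_))
  · exact Set.mem_insert _ _
  · exact Set.mem_insert_of_mem _ rfl

lemma chain_mem (m : ℕ) (K : Type*) [Field K] :
    ∀ n, 1 ≤ n → n ≤ m + 1 →
      xv m K (3 * n - 2) * xv m K (3 * n - 1) ∈ (Ideal.span (JmGens m K)).radical := by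
  intro n
  induction n with
  | zero => omega
  | succ n ih =>
    intro _ h2
    by_cases hn : n = 0
    · subst hn
      norm_num
      exact Ideal.le_radical (Ideal.subset_span (Set.mem_union_left _ rfl))
    · have hn1 : 1 ≤ n := by omega
      have hnm : n ≤ m := by omega
      have hab := ih hn1 (by omega)
      rw [show 3 * (n + 1) - 2 = 3 * n + 1 by omega, show 3 * (n + 1) - 1 = 3 * n + 2 by omega]
      obtain ⟨hF, hG⟩ := FG_mem m K hn1 hnm
      apply Ideal.mem_radical_of_pow_mem (m := 2)
      have key : (xv m K (3 * n + 1) * xv m K (3 * n + 2)) ^ 2 =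
          (xv m K (3 * n + 1) * xv m K (3 * n + 2)) *
            (xv m K (3 * n + 1) * xv m K (3 * n + 2) + xv m K (3 * n - 1) * xv m K (3 * n + 3))
          - (xv m K (3 * n - 1) * xv m K (3 * n + 2)) *
            (xv m K (3 * n - 2) * xv m K (3 * n + 2) + xv m K (3 * n + 1) * xv m K (3 * n + 3))
          + (xv m K (3 * n - 2) * xv m K (3 * n - 1)) * (xv m K (3 * n + 2)) ^ 2 := by
        ring
      rw [key]
      exact Ideal.add_mem _
        (Ideal.sub_mem _ (Ideal.mul_mem_left _ _ (Ideal.le_radical hG))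
          (Ideal.mul_mem_left _ _ (Ideal.le_radical hF)))
        (Ideal.mul_mem_right _ _ hab)

/-- **Example 4 (Barile).** For `m ≥ 2`, the ideal `I_m` equals the radical of `J_m`. -/
theorem Im_eq_radical_Jm (m : ℕ) (hm : 2 ≤ m) (K : Type*) [Field K] :
    Ideal.span (ImGens m K) = (Ideal.span (JmGens m K)).radical := by
  have hJI : Ideal.span (JmGens m K) ≤ Ideal.span (ImGens m K) := by
    rw [Ideal.span_le]
    rintro x (hx | hx)
    · exact Ideal.subset_span (Set.mem_union_left _ hx)
    · simp only [Set.mem_iUnion, Set.mem_Icc] at hx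
      obtain ⟨n, ⟨h1, h2⟩, hx⟩ := hx
      have hmem : ∀ p ∈ ({xv m K (3 * n - 2) * xv m K (3 * n + 2),
          xv m K (3 * n + 1) * xv m K (3 * n + 3),
          xv m K (3 * n + 1) * xv m K (3 * n + 2),
          xv m K (3 * n - 1) * xv m K (3 * n + 3)} :
            Set (MvPolynomial (Fin (3 * m + 3)) K)), p ∈ Ideal.span (ImGens m K) :=
        fun p hp => Ideal.subset_span
          (Set.mem_union_right _ (Set.mem_biUnion (Set.mem_Icc.2 ⟨h1, h2⟩) hp))
      rcases hx with rfl | rfl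
      · exact Ideal.add_mem _ (hmem _ (by simp)) (hmem _ (by simp))
      · exact Ideal.add_mem _ (hmem _ (by simp)) (hmem _ (by simp))
  have hIJ : ImGens m K ⊆ ((Ideal.span (JmGens m K)).radical : Ideal _) := by
    rintro x (hx | hx)
    · rw [Set.mem_singleton_iff] at hx
      subst hx
      exact Ideal.le_radical (Ideal.subset_span (Set.mem_union_left _ rfl))
    · simp only [Set.mem_iUnion, Set.mem_Icc] at hx
      obtain ⟨n, ⟨h1, h2⟩, hx⟩ := hx
      obtain ⟨hF, hG⟩ := FG_mem m K h1 h2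
      have hu : xv m K (3 * n + 1) * xv m K (3 * n + 2) ∈ (Ideal.span (JmGens m K)).radical := by
        have := chain_mem m K (n + 1) (by omega) (by omega)
        rwa [show 3 * (n + 1) - 2 = 3 * n + 1 by omega,
          show 3 * (n + 1) - 1 = 3 * n + 2 by omega] at this
      have hv : xv m K (3 * n - 1) * xv m K (3 * n + 3)
          ∈ (Ideal.span (JmGens m K)).radical := by
        have e : xv m K (3 * n - 1) * xv m K (3 * n + 3) =
            (xv m K (3 * n + 1) * xv m K (3 * n + 2) + xv m K (3 * n - 1) * xv m K (3 * n + 3))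
              - xv m K (3 * n + 1) * xv m K (3 * n + 2) := by ring
        rw [e]
        exact Ideal.sub_mem _ (Ideal.le_radical hG) hu
      have hs : xv m K (3 * n - 2) * xv m K (3 * n + 2)
          ∈ (Ideal.span (JmGens m K)).radical := by
        apply Ideal.mem_radical_of_pow_mem (m := 2)
        have key : (xv m K (3 * n - 2) * xv m K (3 * n + 2)) ^ 2 =
            (xv m K (3 * n - 2) * xv m K (3 * n + 2)) *
              (xv m K (3 * n - 2) * xv m K (3 * n + 2) + xv m K (3 * n + 1) * xv m K (3 * n + 3))
            - (xv m K (3 * n - 2) * xv m K (3 * n + 3)) *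
              (xv m K (3 * n + 1) * xv m K (3 * n + 2)) := by ring
        rw [key]
        exact Ideal.sub_mem _ (Ideal.mul_mem_left _ _ (Ideal.le_radical hF))
          (Ideal.mul_mem_left _ _ hu)
      have ht : xv m K (3 * n + 1) * xv m K (3 * n + 3)
          ∈ (Ideal.span (JmGens m K)).radical := by
        have e : xv m K (3 * n + 1) * xv m K (3 * n + 3) =
            (xv m K (3 * n - 2) * xv m K (3 * n + 2) + xv m K (3 * n + 1) * xv m K (3 * n + 3))
              - xv m K (3 * n - 2) * xv m K (3 * n + 2) := by ring
        rw [e]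
        exact Ideal.sub_mem _ (Ideal.le_radical hF) hs
      rcases hx with rfl | rfl | rfl | rfl
      exacts [hs, ht, hu, hv]
  apply le_antisymm
  · exact Ideal.span_le.2 hIJ
  · calc (Ideal.span (JmGens m K)).radical
        ≤ (Ideal.span (ImGens m K)).radical := Ideal.radical_mono hJI
      _ = Ideal.span (ImGens m K) := (Im_isRadical m K).radical

end Example4
end

section
/- Let m ≥ 2 be an integer, K a field, and R = K[x1,…,x_{3m+3}]. Let I_m be the ideal of R generated by the monomials x1x2 together with, for n = 1,…,m, x_{3n−2}x_{3n+2}, x_{3n+1}x_{3n+3}, x_{3n+1}x_{3n+2}, x_{3n−1}x_{3n+3}. Let P be the ideal of R generated by the set of variables S = {x1} ∪ {x_{3n+2}, x_{3n+3} : n = 1,…,m}. Then P is a minimal prime ideal over I_m and the height of P equals 2m+1. -/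
/-- The set of variables `S = {x₁} ∪ {x_{3n+2}, x_{3n+3} : n = 1, …, m}`. -/
noncomputable def Svars (m : ℕ) (K : Type*) [Field K] :
    Set (MvPolynomial (Fin (3 * m + 3)) K) :=
  {xv m K 1} ∪
    ⋃ n ∈ Set.Icc 1 m,
      ({xv m K (3 * n + 2), xv m K (3 * n + 3)} :
        Set (MvPolynomial (Fin (3 * m + 3)) K))


open MvPolynomial

section Kill

variable {K : Type*} [Field K] {σ : Type*} (T : Set σ) [DecidablePred (· ∈ T)]

/-- The algebra map killing the variables in `T`. -/
noncomputable def killMap : MvPolynomial σ K →ₐ[K] MvPolynomial σ K :=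
  aeval (fun i => if i ∈ T then 0 else X i)

lemma killMap_X_mem {i : σ} (h : i ∈ T) : killMap T (X i : MvPolynomial σ K) = 0 := by
  simp [killMap, h]

lemma killMap_X_notMem {i : σ} (h : i ∉ T) : killMap T (X i : MvPolynomial σ K) = X i := by
  simp [killMap, h]

lemma sub_killMap_mem (p : MvPolynomial σ K) :
    p - killMap T p ∈ Ideal.span (X '' T) := by
  induction p using MvPolynomial.induction_on with
  | C a => simp [killMap]
  | add p q hp hq =>
      have := Ideal.add_mem _ hp hq
      simpa [map_add, add_sub_add_comm] using this
  | mul_X p i hp =>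
      have h1 : p * X i - killMap T p * killMap T (X i) =
          (p - killMap T p) * X i + killMap T p * (X i - killMap T (X i)) := by ring
      rw [map_mul, h1]
      apply Ideal.add_mem
      · exact Ideal.mul_mem_right _ _ hp
      · by_cases h : i ∈ T
        · rw [killMap_X_mem T h, sub_zero]
          exact Ideal.mul_mem_left _ _ (Ideal.subset_span ⟨i, h, rfl⟩)
        · rw [killMap_X_notMem T h, sub_self, mul_zero]
          exact Ideal.zero_mem _

lemma span_X_eq_ker :
    Ideal.span (X '' T : Set (MvPolynomial σ K)) = RingHom.ker (killMap T (K := K)) := by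
  apply le_antisymm
  · rw [Ideal.span_le]
    rintro _ ⟨i, hi, rfl⟩
    simp [RingHom.mem_ker, killMap_X_mem T hi]
  · intro p hp
    have h0 : killMap T p = 0 := RingHom.mem_ker.mp hp
    have := sub_killMap_mem T p
    rwa [h0, sub_zero] at this

lemma isPrime_span_X : (Ideal.span (X '' T : Set (MvPolynomial σ K))).IsPrime := by
  rw [span_X_eq_ker]
  exact RingHom.ker_isPrime _

lemma X_mem_span_X_iff {i : σ} :
    (X i : MvPolynomial σ K) ∈ Ideal.span (X '' T : Set (MvPolynomial σ K)) ↔ i ∈ T := by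
  constructor
  · intro h
    by_contra hi
    rw [span_X_eq_ker] at h
    have h0 : killMap T (X i : MvPolynomial σ K) = 0 := RingHom.mem_ker.mp h
    rw [killMap_X_notMem T hi] at h0
    exact MvPolynomial.X_ne_zero i h0
  · exact fun h => Ideal.subset_span ⟨i, h, rfl⟩

end Kill

/-- Nested Coquand–Lombardi expressions. -/
def IsNested {A : Type*} [CommRing A] : List A → A → Prop
  | [], t => IsUnit t
  | a :: l, t => ∃ (e : ℕ) (b s : A), IsNested l s ∧ t = a ^ e * (s + a * b)

theorem IsNested.notMem_chain {A : Type*} [CommRing A] :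
    ∀ (l : List A) (t : A), IsNested l t →
      ∀ (q : ℕ → Ideal A), (∀ i, (q i).IsPrime) → (∀ i, q i ≤ q (i + 1)) →
        (∀ (i : ℕ) (h : i < l.length), l.get ⟨i, h⟩ ∈ q (i + 1) ∧ l.get ⟨i, h⟩ ∉ q i) →
        t ∉ q 0
  | [], t, ht, q, hq, _, _ => fun hmem =>
      (hq 0).ne_top (Ideal.eq_top_of_isUnit_mem _ hmem ht)
  | a :: l, _, ⟨e, b, s, hs, rfl⟩, q, hq, hmono, hmem => by
      have ha1 : a ∈ q 1 := (hmem 0 (by simp)).1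
      have ha0 : a ∉ q 0 := (hmem 0 (by simp)).2
      have hs1 : s ∉ q 1 := by
        refine IsNested.notMem_chain l s hs (fun i => q (i + 1)) (fun i => hq _)
          (fun i => hmono _) (fun i h => ?_)
        have := hmem (i + 1) (by simpa using Nat.succ_lt_succ h)
        simpa using this
      have h2 : s + a * b ∉ q 1 := by
        intro hmem'
        have hab : a * b ∈ q 1 := Ideal.mul_mem_right _ _ ha1
        have : s ∈ q 1 := by simpa using Ideal.sub_mem _ hmem' hab
        exact hs1 this
      have h3 : s + a * b ∉ q 0 := fun h => h2 (hmono 0 h)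
      intro ht
      rcases (hq 0).mem_or_mem ht with h | h
      · exact ha0 ((hq 0).mem_of_pow_mem _ h)
      · exact h3 h

theorem exists_trailing_decomp {B : Type*} [CommRing B] (P : Polynomial B) (hP : P ≠ 0) :
    ∃ (e : ℕ) (P' : Polynomial B), P = Polynomial.X ^ e * P' ∧ P'.coeff 0 ≠ 0 := by
  suffices h : ∀ (n : ℕ) (P : Polynomial B), P.natDegree ≤ n → P ≠ 0 →
      ∃ (e : ℕ) (P' : Polynomial B), P = Polynomial.X ^ e * P' ∧ P'.coeff 0 ≠ 0 by
    exact h P.natDegree P le_rfl hP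
  clear hP P
  intro n
  induction n with
  | zero =>
      intro P hdeg hP
      refine ⟨0, P, by simp, fun h0 => hP ?_⟩
      rw [Polynomial.eq_C_of_natDegree_eq_zero (Nat.le_zero.mp hdeg), h0, map_zero]
  | succ n IH =>
  intro P hdeg hP
  by_cases h0 : P.coeff 0 ≠ 0
  · exact ⟨0, P, by simp, h0⟩
  · push_neg at h0
    have hP0 : P = Polynomial.X * P.divX := by
      conv_lhs => rw [← Polynomial.X_mul_divX_add P]
      rw [h0, map_zero, add_zero]
    have hdiv : P.divX ≠ 0 := fun h => hP (by rw [hP0, h, mul_zero])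
    have hlt : P.divX.natDegree ≤ n := by
      rw [Polynomial.natDegree_divX_eq_natDegree_tsub_one]
      omega
    obtain ⟨e, P', h1, h2⟩ := IH P.divX hlt hdiv
    exact ⟨e + 1, P', by rw [hP0, h1]; ring, h2⟩

theorem aeval_finSuccEquiv' {K A : Type*} [Field K] [CommRing A] [Algebra K A] {k : ℕ}
    (a : Fin (k + 1) → A) (Q : MvPolynomial (Fin (k + 1)) K) :
    MvPolynomial.aeval a Q =
      Polynomial.eval₂ ((MvPolynomial.aeval (a ∘ Fin.succ) :
        MvPolynomial (Fin k) K →ₐ[K] A) : MvPolynomial (Fin k) K →+* A) (a 0)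
        (MvPolynomial.finSuccEquiv K k Q) := by
  induction Q using MvPolynomial.induction_on with
  | C c => simp [MvPolynomial.finSuccEquiv_apply]
  | add p q hp hq => simp [map_add, hp, hq, Polynomial.eval₂_add]
  | mul_X p i hp =>
      rw [map_mul, map_mul, Polynomial.eval₂_mul, ← hp]
      congr 1
      refine Fin.cases ?_ (fun j => ?_) i
      · rw [MvPolynomial.finSuccEquiv_X_zero]
        simp
      · rw [MvPolynomial.finSuccEquiv_X_succ]
        simp

theorem isNested_aeval {K A : Type*} [Field K] [CommRing A] [Algebra K A] [Nontrivial A] :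
    ∀ (k : ℕ) (a : Fin k → A) (Q : MvPolynomial (Fin k) K), Q ≠ 0 →
      IsNested (List.ofFn a) (MvPolynomial.aeval a Q)
  | 0, a, Q, hQ => by
      have h : List.ofFn a = [] := by simp
      rw [h]
      show IsUnit _
      obtain ⟨c, rfl⟩ := MvPolynomial.C_surjective (Fin 0) Q
      have hc : c ≠ 0 := fun h => hQ (by rw [h, map_zero])
      have : IsUnit ((algebraMap K A) c) := (isUnit_iff_ne_zero.mpr hc).map (algebraMap K A)
      simpa using this
  | (k + 1), a, Q, hQ => by
      have hPne : (MvPolynomial.finSuccEquiv K k Q) ≠ 0 := by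
        intro h
        apply hQ
        have := congrArg (MvPolynomial.finSuccEquiv K k).symm h
        simpa using this
      obtain ⟨e, P', hdec, hcoeff⟩ := exists_trailing_decomp _ hPne
      have IH := isNested_aeval k (a ∘ Fin.succ) (P'.coeff 0) hcoeff
      rw [List.ofFn_succ]
      refine ⟨e, Polynomial.eval₂ ((MvPolynomial.aeval (a ∘ Fin.succ) :
          MvPolynomial (Fin k) K →ₐ[K] A) : MvPolynomial (Fin k) K →+* A) (a 0) P'.divX,
        MvPolynomial.aeval (a ∘ Fin.succ) (P'.coeff 0), IH, ?_⟩
      rw [aeval_finSuccEquiv', hdec]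
      conv_lhs => rw [← Polynomial.X_mul_divX_add P']
      simp only [Polynomial.eval₂_mul, Polynomial.eval₂_add, Polynomial.eval₂_pow,
        Polynomial.eval₂_X, Polynomial.eval₂_C]
      simp only [RingHom.coe_coe]
      ring


theorem exists_annihilating_poly {K : Type*} [Field K] (N : ℕ)
    (a : Fin (N + 1) → MvPolynomial (Fin N) K) :
    ∃ Q : MvPolynomial (Fin (N + 1)) K, Q ≠ 0 ∧ MvPolynomial.aeval a Q = 0 := by
  classical
  set d : ℕ := (Finset.univ.sup fun i => (a i).totalDegree) + 1 with hd
  set t : ℕ := ((N + 1) * d + 1) ^ N + 1 with ht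
  set D : ℕ := (N + 1) * t * d with hD
  set W : Submodule K (MvPolynomial (Fin N) K) := MvPolynomial.restrictDegree (Fin N) K D with hW
  have hdle : ∀ i, (a i).totalDegree ≤ d := fun i => by
    rw [hd]
    exact Nat.le_succ_of_le (Finset.le_sup (f := fun i => (a i).totalDegree) (Finset.mem_univ i))
  have hmem : ∀ β : Fin (N + 1) → Fin t, (∏ i, a i ^ (β i : ℕ)) ∈ W := by
    intro β
    apply MvPolynomial.restrictTotalDegree_le_restrictDegree
    rw [MvPolynomial.mem_restrictTotalDegree]
    calc (∏ i, a i ^ (β i : ℕ)).totalDegree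
        ≤ ∑ i, (a i ^ (β i : ℕ)).totalDegree := MvPolynomial.totalDegree_finset_prod _ _
      _ ≤ ∑ i : Fin (N + 1), t * d := by
          apply Finset.sum_le_sum
          intro i _
          calc (a i ^ (β i : ℕ)).totalDegree ≤ (β i : ℕ) * (a i).totalDegree :=
                MvPolynomial.totalDegree_pow _ _
            _ ≤ t * d := Nat.mul_le_mul (le_of_lt (β i).isLt) (hdle i)
      _ = D := by simp [hD, Finset.sum_const, mul_assoc]
  -- the set indexing the basis of W
  let s : Set (Fin N →₀ ℕ) := {n | ∀ i, n i ≤ D}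
  let emb : s → (Fin N → Fin (D + 1)) := fun n i => ⟨n.1 i, Nat.lt_succ_of_le (n.2 i)⟩
  have hemb : Function.Injective emb := by
    intro f g h
    apply Subtype.ext
    ext i
    exact congrArg Fin.val (congrFun h i)
  haveI : Fintype s := Fintype.ofInjective emb hemb
  have hrank : Module.finrank K W ≤ (D + 1) ^ N := by
    have hWs : Module.finrank K W = Module.finrank K (MvPolynomial.restrictSupport K s) := rfl
    rw [hWs, Module.finrank_eq_card_basis (MvPolynomial.basisRestrictSupport K s)]
    calc Fintype.card s ≤ Fintype.card (Fin N → Fin (D + 1)) :=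
          Fintype.card_le_of_injective emb hemb
      _ = (D + 1) ^ N := by simp
  have htpos : 1 ≤ t := by omega
  have hcard : Module.finrank K W < Fintype.card (Fin (N + 1) → Fin t) := by
    have h1 : (D + 1) ≤ ((N + 1) * d + 1) * t := by
      have : ((N + 1) * d + 1) * t = (N + 1) * d * t + t := by ring
      rw [this, hD]
      have : (N + 1) * t * d = (N + 1) * d * t := by ring
      omega
    have h2 : (D + 1) ^ N ≤ (((N + 1) * d + 1)) ^ N * t ^ N := by
      calc (D + 1) ^ N ≤ (((N + 1) * d + 1) * t) ^ N := Nat.pow_le_pow_left h1 N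
        _ = (((N + 1) * d + 1)) ^ N * t ^ N := mul_pow _ _ _
    have h3 : (((N + 1) * d + 1)) ^ N * t ^ N < t * t ^ N := by
      have htn : 0 < t ^ N := Nat.pow_pos (by omega)
      exact Nat.mul_lt_mul_of_lt_of_le (by omega) le_rfl htn
    have h4 : Fintype.card (Fin (N + 1) → Fin t) = t ^ (N + 1) := by simp
    have h5 : t * t ^ N = t ^ (N + 1) := by ring
    omega
  have hnotli : ¬ LinearIndependent K
      (fun β : Fin (N + 1) → Fin t => (⟨∏ i, a i ^ (β i : ℕ), hmem β⟩ : W)) := by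
    intro h
    exact absurd h.fintype_card_le_finrank (by omega)
  rw [Fintype.not_linearIndependent_iff] at hnotli
  obtain ⟨g, hsum, β₀, hβ₀⟩ := hnotli
  have hsum' : ∑ β : Fin (N + 1) → Fin t, g β • (∏ i, a i ^ (β i : ℕ)) = 0 := by
    have := congrArg (Subtype.val) hsum
    simpa using this
  let toF : (Fin (N + 1) → Fin t) → (Fin (N + 1) →₀ ℕ) := fun β =>
    Finsupp.equivFunOnFinite.symm (fun i => (β i : ℕ))
  have htoF : Function.Injective toF := by
    intro β γ h
    have h2 : (fun i => (β i : ℕ)) = fun i => (γ i : ℕ) :=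
      Finsupp.equivFunOnFinite.symm.injective h
    funext i
    exact Fin.val_injective (congrFun h2 i)
  have hprodeq : ∀ β : Fin (N + 1) → Fin t,
      (toF β).prod (fun i e => a i ^ e) = ∏ i, a i ^ (β i : ℕ) := by
    intro β
    rw [Finsupp.prod_fintype]
    · simp [toF]
    · intro i; exact pow_zero _
  refine ⟨∑ β : Fin (N + 1) → Fin t, MvPolynomial.monomial (toF β) (g β), ?_, ?_⟩
  · intro h
    have hc := congrArg (MvPolynomial.coeff (toF β₀)) h
    rw [MvPolynomial.coeff_sum] at hc
    rw [Finset.sum_eq_single β₀ (fun β _ hne => by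
      rw [MvPolynomial.coeff_monomial, if_neg (fun he => hne (htoF he))])
      (fun h => absurd (Finset.mem_univ β₀) h)] at hc
    rw [MvPolynomial.coeff_monomial, if_pos rfl] at hc
    simp at hc
    exact hβ₀ hc
  · rw [map_sum]
    rw [← hsum']
    apply Finset.sum_congr rfl
    intro β _
    rw [MvPolynomial.aeval_monomial, hprodeq β, Algebra.smul_def]

theorem ltSeries_length_le_nvars {K : Type*} [Field K] (N : ℕ)
    (p : LTSeries (PrimeSpectrum (MvPolynomial (Fin N) K))) : p.length ≤ N := by
  by_contra hlen
  push_neg at hlen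
  set q : ℕ → Ideal (MvPolynomial (Fin N) K) :=
    fun n => (p ⟨min n p.length, by omega⟩).asIdeal with hq
  have hqmono : ∀ i, q i ≤ q (i + 1) := by
    intro i
    exact p.monotone (by simp only [Fin.mk_le_mk]; omega)
  have hstrict : ∀ i : ℕ, i < p.length → q i < q (i + 1) := by
    intro i hi
    exact p.strictMono (by simp only [Fin.mk_lt_mk]; omega)
  have hex : ∀ i : Fin (N + 1), ∃ x, x ∈ q (i + 1) ∧ x ∉ q i := by
    intro i
    obtain ⟨x, hx1, hx2⟩ := SetLike.exists_of_lt (hstrict i (by omega))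
    exact ⟨x, hx1, hx2⟩
  choose a ha1 ha2 using hex
  obtain ⟨Q, hQ0, hQa⟩ := exists_annihilating_poly N a
  have hnested := isNested_aeval (N + 1) a Q hQ0
  rw [hQa] at hnested
  have hnot := IsNested.notMem_chain _ _ hnested q
    (fun i => (p _).isPrime) hqmono ?_
  · exact hnot (Ideal.zero_mem _)
  · intro i h
    have hi : i < N + 1 := by simpa using h
    have hget : (List.ofFn a).get ⟨i, h⟩ = a ⟨i, hi⟩ := by
      simp only [List.get_ofFn]
      rfl
    rw [hget]
    exact ⟨ha1 ⟨i, hi⟩, ha2 ⟨i, hi⟩⟩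
/-! ### The index sets -/

def inT (m v : ℕ) : Prop :=
  v = 0 ∨ ∃ n, 1 ≤ n ∧ n ≤ m ∧ (v = 3 * n + 1 ∨ v = 3 * n + 2)

def rho (m i : ℕ) : ℕ :=
  if i = 0 then 0
  else if i ≤ 2 * m then (if i % 2 = 1 then 3 * ((i + 1) / 2) + 1 else 3 * (i / 2) + 2)
  else if i = 2 * m + 1 then 1
  else if i = 2 * m + 2 then 2
  else 3 * (i - (2 * m + 2))

lemma rho_lt (m : ℕ) (i : ℕ) (hi : i ≤ 3 * m + 2) : rho m i < 3 * m + 3 := by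
  unfold rho
  split_ifs <;> omega

lemma rho_inj (m : ℕ) (i j : ℕ) (hij : i < j) (hj : j ≤ 3 * m + 2) : rho m i ≠ rho m j := by
  unfold rho
  split_ifs <;> omega

lemma inT_iff_rho (m v : ℕ) : inT m v ↔ ∃ i, i ≤ 2 * m ∧ rho m i = v := by
  constructor
  · rintro (rfl | ⟨n, h1, h2, rfl | rfl⟩)
    · exact ⟨0, by omega, by unfold rho; simp⟩
    · refine ⟨2 * n - 1, by omega, ?_⟩
      unfold rho; split_ifs <;> omega
    · refine ⟨2 * n, by omega, ?_⟩
      unfold rho; split_ifs <;> omega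
  · rintro ⟨i, hi, rfl⟩
    by_cases h0 : i = 0
    · subst h0; left; unfold rho; simp
    · right
      by_cases h2 : i % 2 = 1
      · refine ⟨(i + 1) / 2, by omega, by omega, Or.inl ?_⟩
        unfold rho; split_ifs <;> omega
      · refine ⟨i / 2, by omega, by omega, Or.inr ?_⟩
        unfold rho; split_ifs <;> omega

def TsetF (m : ℕ) : Set (Fin (3 * m + 3)) := {j | inT m j.val}

def UsetF (m j : ℕ) : Set (Fin (3 * m + 3)) := {v | ∃ i, i < j ∧ rho m i = v.val}

lemma UsetF_top (m : ℕ) : UsetF m (2 * m + 1) = TsetF m := by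
  ext v
  constructor
  · rintro ⟨i, hi, he⟩
    exact (inT_iff_rho m v.val).mpr ⟨i, by omega, he⟩
  · intro hv
    obtain ⟨i, hi, he⟩ := (inT_iff_rho m v.val).mp hv
    exact ⟨i, by omega, he⟩

lemma xv_eq (m : ℕ) (K : Type*) [Field K] {k : ℕ} (h1 : 1 ≤ k) (h2 : k ≤ 3 * m + 3) :
    xv m K k = MvPolynomial.X ⟨k - 1, by omega⟩ := dif_pos ⟨h1, h2⟩

lemma Svars_eq_image (m : ℕ) (hm : 2 ≤ m) (K : Type*) [Field K] :
    Svars m K = MvPolynomial.X '' (TsetF m) := by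
  ext x
  constructor
  · intro hx
    rcases hx with hx | hx
    · rw [Set.mem_singleton_iff] at hx
      subst hx
      rw [xv_eq m K (by omega) (by omega)]
      exact ⟨⟨0, by omega⟩, Or.inl rfl, rfl⟩
    · obtain ⟨n, hn, hx⟩ := Set.mem_iUnion₂.mp hx
      rw [Set.mem_Icc] at hn
      simp only [Set.mem_insert_iff, Set.mem_singleton_iff] at hx
      rcases hx with rfl | rfl
      · rw [xv_eq m K (by omega) (by omega)]
        exact ⟨⟨3 * n + 2 - 1, by omega⟩, Or.inr ⟨n, hn.1, hn.2, Or.inl (show 3 * n + 2 - 1 = 3 * n + 1 by omega)⟩, rfl⟩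
      · rw [xv_eq m K (by omega) (by omega)]
        exact ⟨⟨3 * n + 3 - 1, by omega⟩, Or.inr ⟨n, hn.1, hn.2, Or.inr (show 3 * n + 3 - 1 = 3 * n + 2 by omega)⟩, rfl⟩
  · rintro ⟨j, hj, rfl⟩
    simp only [TsetF, Set.mem_setOf_eq, inT] at hj
    rcases hj with h0 | ⟨n, h1, h2, h3 | h3⟩
    · left
      rw [Set.mem_singleton_iff, xv_eq m K (k := 1) (by omega) (by omega)]
      exact congrArg MvPolynomial.X (Fin.ext (show (j : ℕ) = 1 - 1 by omega))
    · right
      refine Set.mem_iUnion₂.mpr ⟨n, ⟨h1, h2⟩, ?_⟩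
      left
      rw [xv_eq m K (k := 3 * n + 2) (by omega) (by omega)]
      exact congrArg MvPolynomial.X (Fin.ext (show (j : ℕ) = 3 * n + 2 - 1 by omega))
    · right
      refine Set.mem_iUnion₂.mpr ⟨n, ⟨h1, h2⟩, ?_⟩
      right
      rw [Set.mem_singleton_iff, xv_eq m K (k := 3 * n + 3) (by omega) (by omega)]
      exact congrArg MvPolynomial.X (Fin.ext (show (j : ℕ) = 3 * n + 3 - 1 by omega))

lemma span_ImGens_le (m : ℕ) (hm : 2 ≤ m) (K : Type*) [Field K] :
    Ideal.span (ImGens m K) ≤ Ideal.span (MvPolynomial.X '' TsetF m) := by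
  rw [Ideal.span_le]
  rintro g hg
  rcases hg with hg | hg
  · rw [Set.mem_singleton_iff] at hg
    subst hg
    rw [xv_eq m K (by omega) (by omega)]
    exact Ideal.mul_mem_right _ _ (Ideal.subset_span ⟨⟨0, by omega⟩, Or.inl rfl, rfl⟩)
  · obtain ⟨n, hn, hg⟩ := Set.mem_iUnion₂.mp hg
    rw [Set.mem_Icc] at hn
    simp only [Set.mem_insert_iff, Set.mem_singleton_iff] at hg
    rcases hg with rfl | rfl | rfl | rfl
    · rw [xv_eq m K (by omega) (by omega), xv_eq m K (k := 3 * n + 2) (by omega) (by omega)]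
      exact Ideal.mul_mem_left _ _ (Ideal.subset_span
        ⟨⟨3 * n + 2 - 1, by omega⟩, Or.inr ⟨n, hn.1, hn.2, Or.inl (show 3 * n + 2 - 1 = 3 * n + 1 by omega)⟩, rfl⟩)
    · rw [xv_eq m K (by omega) (by omega), xv_eq m K (k := 3 * n + 3) (by omega) (by omega)]
      exact Ideal.mul_mem_left _ _ (Ideal.subset_span
        ⟨⟨3 * n + 3 - 1, by omega⟩, Or.inr ⟨n, hn.1, hn.2, Or.inr (show 3 * n + 3 - 1 = 3 * n + 2 by omega)⟩, rfl⟩)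
    · rw [xv_eq m K (by omega) (by omega), xv_eq m K (k := 3 * n + 2) (by omega) (by omega)]
      exact Ideal.mul_mem_left _ _ (Ideal.subset_span
        ⟨⟨3 * n + 2 - 1, by omega⟩, Or.inr ⟨n, hn.1, hn.2, Or.inl (show 3 * n + 2 - 1 = 3 * n + 1 by omega)⟩, rfl⟩)
    · rw [xv_eq m K (by omega) (by omega), xv_eq m K (k := 3 * n + 3) (by omega) (by omega)]
      exact Ideal.mul_mem_left _ _ (Ideal.subset_span
        ⟨⟨3 * n + 3 - 1, by omega⟩, Or.inr ⟨n, hn.1, hn.2, Or.inr (show 3 * n + 3 - 1 = 3 * n + 2 by omega)⟩, rfl⟩)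

lemma span_le_of_prime (m : ℕ) (hm : 2 ≤ m) (K : Type*) [Field K]
    (Q : Ideal (MvPolynomial (Fin (3 * m + 3)) K)) (hQp : Q.IsPrime)
    (hIQ : Ideal.span (ImGens m K) ≤ Q)
    (hQP : Q ≤ Ideal.span (MvPolynomial.X '' TsetF m)) :
    Ideal.span (MvPolynomial.X '' TsetF m) ≤ Q := by
  classical
  have hgen : ∀ g ∈ ImGens m K, g ∈ Q := fun g hg => hIQ (Ideal.subset_span hg)
  have hnotP : ∀ (v : ℕ) (hv : v < 3 * m + 3), ¬ inT m v →
      MvPolynomial.X (⟨v, hv⟩ : Fin (3 * m + 3)) ∉ Q := by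
    intro v hv hvT hXv
    have h2 := hQP hXv
    rw [X_mem_span_X_iff] at h2
    exact hvT h2
  rw [Ideal.span_le]
  rintro _ ⟨j, hj, rfl⟩
  simp only [TsetF, Set.mem_setOf_eq, inT] at hj
  rcases hj with h0 | ⟨n, h1, h2, h3 | h3⟩
  · have hg : xv m K 1 * xv m K 2 ∈ Q := hgen _ (Or.inl rfl)
    rw [xv_eq m K (by omega) (by omega), xv_eq m K (k := 2) (by omega) (by omega)] at hg
    rcases hQp.mem_or_mem hg with h | h
    · have heq : (⟨1 - 1, by omega⟩ : Fin (3 * m + 3)) = j :=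
        Fin.ext (show 1 - 1 = (j : ℕ) by omega)
      rwa [heq] at h
    · exact absurd h (hnotP (2 - 1) (by omega)
        (by rintro (h' | ⟨n', a1, a2, a3 | a3⟩) <;> omega))
  · have hg : xv m K (3 * n + 1) * xv m K (3 * n + 2) ∈ Q := by
      refine hgen _ (Set.mem_union_right _ (Set.mem_iUnion₂.mpr ⟨n, ⟨h1, h2⟩, ?_⟩))
      simp
    rw [xv_eq m K (by omega) (by omega), xv_eq m K (k := 3 * n + 2) (by omega) (by omega)] at hg
    rcases hQp.mem_or_mem hg with h | h
    · exact absurd h (hnotP (3 * n + 1 - 1) (by omega)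
        (by rintro (h' | ⟨n', a1, a2, a3 | a3⟩) <;> omega))
    · have heq : (⟨3 * n + 2 - 1, by omega⟩ : Fin (3 * m + 3)) = j :=
        Fin.ext (show 3 * n + 2 - 1 = (j : ℕ) by omega)
      rwa [heq] at h
  · have hg : xv m K (3 * n + 1) * xv m K (3 * n + 3) ∈ Q := by
      refine hgen _ (Set.mem_union_right _ (Set.mem_iUnion₂.mpr ⟨n, ⟨h1, h2⟩, ?_⟩))
      simp
    rw [xv_eq m K (by omega) (by omega), xv_eq m K (k := 3 * n + 3) (by omega) (by omega)] at hg
    rcases hQp.mem_or_mem hg with h | h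
    · exact absurd h (hnotP (3 * n + 1 - 1) (by omega)
        (by rintro (h' | ⟨n', a1, a2, a3 | a3⟩) <;> omega))
    · have heq : (⟨3 * n + 3 - 1, by omega⟩ : Fin (3 * m + 3)) = j :=
        Fin.ext (show 3 * n + 3 - 1 = (j : ℕ) by omega)
      rwa [heq] at h

/-- The chain of coordinate primes along the enumeration `rho`. -/
noncomputable def primePt (m : ℕ) (K : Type*) [Field K] (j : ℕ) :
    PrimeSpectrum (MvPolynomial (Fin (3 * m + 3)) K) :=
  ⟨Ideal.span (MvPolynomial.X '' UsetF m j),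
    letI := Classical.decPred (· ∈ UsetF m j); isPrime_span_X _⟩

lemma primePt_lt (m : ℕ) (K : Type*) [Field K] (j : ℕ) (hj : j ≤ 3 * m + 2) :
    primePt m K j < primePt m K (j + 1) := by
  classical
  rw [← PrimeSpectrum.asIdeal_lt_asIdeal]
  rw [lt_iff_le_not_ge]
  constructor
  · apply Ideal.span_mono
    apply Set.image_mono
    rintro v ⟨i, hi, he⟩
    exact ⟨i, by omega, he⟩
  · intro hle'
    have hmem : MvPolynomial.X (⟨rho m j, rho_lt m j hj⟩ : Fin (3 * m + 3)) ∈
        (primePt m K (j + 1)).asIdeal :=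
      Ideal.subset_span ⟨⟨rho m j, rho_lt m j hj⟩, ⟨j, by omega, rfl⟩, rfl⟩
    have h2 : MvPolynomial.X (⟨rho m j, rho_lt m j hj⟩ : Fin (3 * m + 3)) ∈
        Ideal.span (MvPolynomial.X '' UsetF m j) := hle' hmem
    rw [X_mem_span_X_iff] at h2
    obtain ⟨i, hi, he⟩ := h2
    exact rho_inj m i j hi hj he

theorem Svars_span_minimalPrime_height' (m : ℕ) (hm : 2 ≤ m) (K : Type*) [Field K] :
    ∃ hP : (Ideal.span (Svars m K)).IsPrime,
      Ideal.span (Svars m K) ∈ (Ideal.span (ImGens m K)).minimalPrimes ∧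
        Order.height (⟨Ideal.span (Svars m K), hP⟩ :
          PrimeSpectrum (MvPolynomial (Fin (3 * m + 3)) K)) = (2 * m + 1 : ℕ) := by
  classical
  have hSeq := Svars_eq_image m hm K
  have hP : (Ideal.span (Svars m K)).IsPrime := by
    rw [hSeq]; exact isPrime_span_X _
  refine ⟨hP, ?_, ?_⟩
  · show Minimal (fun q => q.IsPrime ∧ Ideal.span (ImGens m K) ≤ q) (Ideal.span (Svars m K))
    constructor
    · refine ⟨hP, ?_⟩
      rw [hSeq]
      exact span_ImGens_le m hm K
    · rintro Q ⟨hQp, hIQ⟩ hQP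
      rw [hSeq] at hQP ⊢
      exact span_le_of_prime m hm K Q hQp hIQ hQP
  · set pt : PrimeSpectrum (MvPolynomial (Fin (3 * m + 3)) K) :=
      ⟨Ideal.span (Svars m K), hP⟩ with hptdef
    have hpt : pt = primePt m K (2 * m + 1) := by
      apply PrimeSpectrum.ext
      show Ideal.span (Svars m K) = _
      rw [hSeq]
      show _ = Ideal.span (MvPolynomial.X '' UsetF m (2 * m + 1))
      rw [UsetF_top]
    apply le_antisymm
    · apply Order.height_le
      intro c hc
      let r : LTSeries (PrimeSpectrum (MvPolynomial (Fin (3 * m + 3)) K)) :=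
        ⟨m + 1, fun i => primePt m K (2 * m + 2 + i.val),
          fun i => primePt_lt m K (2 * m + 2 + i.val) (by have := i.isLt; omega)⟩
      have hconn : c.last < r.head := by
        rw [hc, hpt]
        exact primePt_lt m K (2 * m + 1) (by omega)
      have hlen := ltSeries_length_le_nvars (K := K) (3 * m + 3) (c.append r hconn)
      have hlen2 : (c.append r hconn).length = c.length + (m + 1) + 1 := rfl
      rw [hlen2] at hlen
      have : c.length ≤ 2 * m + 1 := by omega
      exact_mod_cast this
    · let low : LTSeries (PrimeSpectrum (MvPolynomial (Fin (3 * m + 3)) K)) :=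
        ⟨2 * m + 1, fun i => primePt m K i.val,
          fun i => primePt_lt m K i.val (by have := i.isLt; omega)⟩
      have hlast : low.last = pt := by
        rw [hpt]
        show primePt m K (Fin.last (2 * m + 1)).val = _
        rfl
      have hh := Order.length_le_height_last (p := low)
      rw [hlast] at hh
      exact_mod_cast hh

/-- **Example 4 (Barile).** For `m ≥ 2`, the ideal `P = (S)` generated by the variables
`S = {x₁} ∪ {x_{3n+2}, x_{3n+3} : n = 1, …, m}` is a minimal prime over `I_m`, of
height `2m + 1` (the height of a prime being the supremum of the lengths of chains of
primes descending from it). -/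
theorem Svars_span_minimalPrime_height (m : ℕ) (hm : 2 ≤ m) (K : Type*) [Field K] :
    ∃ hP : (Ideal.span (Svars m K)).IsPrime,
      Ideal.span (Svars m K) ∈ (Ideal.span (ImGens m K)).minimalPrimes ∧
        Order.height (⟨Ideal.span (Svars m K), hP⟩ :
          PrimeSpectrum (MvPolynomial (Fin (3 * m + 3)) K)) = (2 * m + 1 : ℕ) := by
  exact Svars_span_minimalPrime_height' m hm K
end

section
/- Let K be an algebraically closed field and R = K[x1,…,x6]. Let I be the ideal of R generated by the monomials x1x3, x1x4, x1x5, x2x4, x2x5, x2x6, x3x5, x3x6, x4x6. Then I equals the radical of the ideal generated by the four polynomials x3x6, x1x4 + x2x5, x1x3 + x2x4 + x3x5, x1x5 + x2x6 + x4x6. -/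
open MvPolynomial

section Aux

variable {K : Type*} [Field K]

/-- Subtracting the "kill the variables in `S`" evaluation lands in the ideal
generated by the variables in `S`. -/
lemma BT_sub_aeval_mem (S : Finset (Fin 6)) (f : MvPolynomial (Fin 6) K) :
    f - aeval (fun i => if i ∈ S then (0 : MvPolynomial (Fin 6) K) else X i) f
      ∈ Ideal.span (X '' (↑S : Set (Fin 6))) := by
  induction f using MvPolynomial.induction_on with
  | C a => simp
  | add p q hp hq =>
      rw [map_add]
      have h := Ideal.add_mem _ hp hq
      convert h using 1
      ring
  | mul_X p i hp =>
      rw [map_mul, aeval_X]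
      by_cases hi : i ∈ S
      · rw [if_pos hi, mul_zero, sub_zero]
        exact Ideal.mul_mem_left _ p (Ideal.subset_span ⟨i, Finset.mem_coe.2 hi, rfl⟩)
      · rw [if_neg hi]
        have h : p * X i -
            aeval (fun j => if j ∈ S then (0 : MvPolynomial (Fin 6) K) else X j) p * X i
            = (p - aeval (fun j => if j ∈ S then (0 : MvPolynomial (Fin 6) K) else X j) p)
              * X i := by ring
        rw [h]
        exact Ideal.mul_mem_right _ _ hp

/-- The ideal generated by a set of variables is prime. -/
lemma BT_span_X_isPrime (S : Finset (Fin 6)) :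
    (Ideal.span (X '' (↑S : Set (Fin 6)) : Set (MvPolynomial (Fin 6) K))).IsPrime := by
  have hker : Ideal.span (X '' (↑S : Set (Fin 6)) : Set (MvPolynomial (Fin 6) K))
      = RingHom.ker (aeval (fun i => if i ∈ S then (0 : MvPolynomial (Fin 6) K) else X i) :
          MvPolynomial (Fin 6) K →ₐ[K] MvPolynomial (Fin 6) K) := by
    apply le_antisymm
    · rw [Ideal.span_le]
      rintro x ⟨i, hi, rfl⟩
      have hi' : i ∈ S := Finset.mem_coe.1 hi
      simp [RingHom.mem_ker, hi']
    · intro f hf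
      have h := BT_sub_aeval_mem (K := K) S f
      rw [RingHom.mem_ker] at hf
      rwa [hf, sub_zero] at h
  rw [hker]
  exact RingHom.ker_isPrime _

lemma BT_pairmem {a b : Fin 6} {S : Finset (Fin 6)} (h : a ∈ S ∨ b ∈ S) :
    (X a * X b : MvPolynomial (Fin 6) K) ∈ Ideal.span (X '' (↑S : Set (Fin 6))) := by
  rcases h with h | h
  · exact Ideal.mul_mem_right _ _ (Ideal.subset_span ⟨a, Finset.mem_coe.2 h, rfl⟩)
  · exact Ideal.mul_mem_left _ _ (Ideal.subset_span ⟨b, Finset.mem_coe.2 h, rfl⟩)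

lemma BT_comb : ∀ b : Fin 6 → Bool,
    (b 2 || b 3 || b 4 || b 5) = true → (b 0 || b 3 || b 4 || b 5) = true →
    (b 0 || b 1 || b 4 || b 5) = true → (b 0 || b 1 || b 2 || b 5) = true →
    (b 0 || b 1 || b 2 || b 3) = true → (b 1 || b 2 || b 3 || b 4) = true →
    ((b 0 && b 2) || (b 0 && b 3) || (b 0 && b 4) || (b 1 && b 3) || (b 1 && b 4) ||
     (b 1 && b 5) || (b 2 && b 4) || (b 2 && b 5) || (b 3 && b 5)) = true := by decide

lemma BT_pair_le {a b : Fin 6} (hab : a ≠ b) {m : Fin 6 →₀ ℕ} (ha : m a ≠ 0) (hb : m b ≠ 0) :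
    Finsupp.single a 1 + Finsupp.single b 1 ≤ m := by
  rw [Finsupp.le_iff]
  intro i _
  simp only [Finsupp.coe_add, Pi.add_apply, Finsupp.single_apply]
  rcases eq_or_ne a i with h1 | h1 <;> rcases eq_or_ne b i with h2 | h2
  · exact absurd (h1.trans h2.symm) hab
  · rw [if_pos h1, if_neg h2]; subst h1; omega
  · rw [if_neg h1, if_pos h2]; subst h2; omega
  · rw [if_neg h1, if_neg h2]; omega

lemma BT_XX (a b : Fin 6) :
    (X a * X b : MvPolynomial (Fin 6) K)
      = monomial (Finsupp.single a 1 + Finsupp.single b 1) 1 := by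
  rw [← pow_one (X a), ← pow_one (X b), X_pow_eq_monomial, X_pow_eq_monomial,
    monomial_mul, one_mul]

end Aux

set_option maxHeartbeats 2000000 in
/-- **Example 6 (Barile/Terai).** Let `K` be algebraically closed and `R = K[x₁,…,x₆]`.
The ideal `I = (x₁x₃, x₁x₄, x₁x₅, x₂x₄, x₂x₅, x₂x₆, x₃x₅, x₃x₆, x₄x₆)` satisfies
`I = √(x₃x₆, x₁x₄ + x₂x₅, x₁x₃ + x₂x₄ + x₃x₅, x₁x₅ + x₂x₆ + x₄x₆)`.
(The variables `x₁,…,x₆` are `X 0, …, X 5`.) -/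
theorem hexagon_eq_radical_four (K : Type*) [Field K] [IsAlgClosed K] :
    Ideal.span ({X 0 * X 2, X 0 * X 3, X 0 * X 4, X 1 * X 3, X 1 * X 4, X 1 * X 5,
        X 2 * X 4, X 2 * X 5, X 3 * X 5} : Set (MvPolynomial (Fin 6) K)) =
      (Ideal.span ({X 2 * X 5,
        X 0 * X 3 + X 1 * X 4,
        X 0 * X 2 + X 1 * X 3 + X 2 * X 4,
        X 0 * X 4 + X 1 * X 5 + X 3 * X 5} : Set (MvPolynomial (Fin 6) K))).radical := by
  have m1 : (X 2 * X 5 : MvPolynomial (Fin 6) K) ∈ Ideal.span ({X 2 * X 5,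
        X 0 * X 3 + X 1 * X 4, X 0 * X 2 + X 1 * X 3 + X 2 * X 4,
        X 0 * X 4 + X 1 * X 5 + X 3 * X 5} : Set (MvPolynomial (Fin 6) K)) :=
    Ideal.subset_span (Set.mem_insert _ _)
  have m2 : (X 0 * X 3 + X 1 * X 4 : MvPolynomial (Fin 6) K) ∈ Ideal.span ({X 2 * X 5,
        X 0 * X 3 + X 1 * X 4, X 0 * X 2 + X 1 * X 3 + X 2 * X 4,
        X 0 * X 4 + X 1 * X 5 + X 3 * X 5} : Set (MvPolynomial (Fin 6) K)) :=
    Ideal.subset_span (Set.mem_insert_of_mem _ (Set.mem_insert _ _))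
  have m3 : (X 0 * X 2 + X 1 * X 3 + X 2 * X 4 : MvPolynomial (Fin 6) K) ∈
      Ideal.span ({X 2 * X 5,
        X 0 * X 3 + X 1 * X 4, X 0 * X 2 + X 1 * X 3 + X 2 * X 4,
        X 0 * X 4 + X 1 * X 5 + X 3 * X 5} : Set (MvPolynomial (Fin 6) K)) :=
    Ideal.subset_span (Set.mem_insert_of_mem _ (Set.mem_insert_of_mem _ (Set.mem_insert _ _)))
  have m4 : (X 0 * X 4 + X 1 * X 5 + X 3 * X 5 : MvPolynomial (Fin 6) K) ∈
      Ideal.span ({X 2 * X 5,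
        X 0 * X 3 + X 1 * X 4, X 0 * X 2 + X 1 * X 3 + X 2 * X 4,
        X 0 * X 4 + X 1 * X 5 + X 3 * X 5} : Set (MvPolynomial (Fin 6) K)) :=
    Ideal.subset_span (Set.mem_insert_of_mem _ (Set.mem_insert_of_mem _
      (Set.mem_insert_of_mem _ rfl)))
  have hJ : ∀ c1 c2 c3 c4 : MvPolynomial (Fin 6) K,
      c1 * (X 2 * X 5) + c2 * (X 0 * X 3 + X 1 * X 4)
        + c3 * (X 0 * X 2 + X 1 * X 3 + X 2 * X 4)
        + c4 * (X 0 * X 4 + X 1 * X 5 + X 3 * X 5) ∈ Ideal.span ({X 2 * X 5,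
        X 0 * X 3 + X 1 * X 4, X 0 * X 2 + X 1 * X 3 + X 2 * X 4,
        X 0 * X 4 + X 1 * X 5 + X 3 * X 5} : Set (MvPolynomial (Fin 6) K)) :=
    fun c1 c2 c3 c4 => add_mem (add_mem (add_mem (Ideal.mul_mem_left _ _ m1)
      (Ideal.mul_mem_left _ _ m2)) (Ideal.mul_mem_left _ _ m3)) (Ideal.mul_mem_left _ _ m4)
  apply le_antisymm
  · -- I ≤ radical J : explicit power identities
    rw [Ideal.span_le]
    intro x hx
    simp only [Set.mem_insert_iff, Set.mem_singleton_iff] at hx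
    rw [SetLike.mem_coe, Ideal.mem_radical_iff]
    rcases hx with rfl | rfl | rfl | rfl | rfl | rfl | rfl | rfl | rfl
    · refine ⟨3, ?_⟩
      rw [show (X 0 * X 2 : MvPolynomial (Fin 6) K) ^ 3 =
        (- X 1 * X 1 * X 2 * X 3 - X 1 * X 1 * X 1 * X 2 + X 0 * X 2 * X 2 * X 3
          + X 0 * X 1 * X 2 * X 2) * (X 2 * X 5)
        + (- X 0 * X 1 * X 2 * X 2) * (X 0 * X 3 + X 1 * X 4)
        + (X 0 * X 0 * X 2 * X 2) * (X 0 * X 2 + X 1 * X 3 + X 2 * X 4)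
        + (X 1 * X 1 * X 2 * X 2 - X 0 * X 2 * X 2 * X 2)
            * (X 0 * X 4 + X 1 * X 5 + X 3 * X 5) from by ring]
      exact hJ _ _ _ _
    · refine ⟨2, ?_⟩
      rw [show (X 0 * X 3 : MvPolynomial (Fin 6) K) ^ 2 =
        (- X 3 * X 4 - X 1 * X 4 - X 0 * X 3 - X 0 * X 1) * (X 2 * X 5)
        + (X 0 * X 3) * (X 0 * X 3 + X 1 * X 4)
        + (X 3 * X 5 + X 1 * X 5) * (X 0 * X 2 + X 1 * X 3 + X 2 * X 4)
        + (- X 1 * X 3) * (X 0 * X 4 + X 1 * X 5 + X 3 * X 5) from by ring]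
      exact hJ _ _ _ _
    · refine ⟨3, ?_⟩
      rw [show (X 0 * X 4 : MvPolynomial (Fin 6) K) ^ 3 =
        (X 4 * X 4 * X 4 * X 5 - X 0 * X 4 * X 4 * X 5 - X 0 * X 0 * X 4 * X 5
          + X 0 * X 0 * X 0 * X 5) * (X 2 * X 5)
        + (X 3 * X 4 * X 5 * X 5 - X 0 * X 3 * X 5 * X 5 - X 0 * X 0 * X 4 * X 5)
            * (X 0 * X 3 + X 1 * X 4)
        + (- X 4 * X 4 * X 5 * X 5 + 2 * X 0 * X 4 * X 5 * X 5 - X 0 * X 0 * X 5 * X 5)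
            * (X 0 * X 2 + X 1 * X 3 + X 2 * X 4)
        + (- X 0 * X 3 * X 4 * X 5 + X 0 * X 0 * X 4 * X 4 + X 0 * X 0 * X 3 * X 5)
            * (X 0 * X 4 + X 1 * X 5 + X 3 * X 5) from by ring]
      exact hJ _ _ _ _
    · refine ⟨3, ?_⟩
      rw [show (X 1 * X 3 : MvPolynomial (Fin 6) K) ^ 3 =
        (X 2 * X 3 * X 3 * X 3 - X 1 * X 2 * X 3 * X 3 - X 1 * X 1 * X 2 * X 3
          + X 1 * X 1 * X 1 * X 2) * (X 2 * X 5)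
        + (- X 1 * X 2 * X 3 * X 3 - X 0 * X 2 * X 2 * X 3 + X 0 * X 1 * X 2 * X 2)
            * (X 0 * X 3 + X 1 * X 4)
        + (X 1 * X 1 * X 3 * X 3 + X 0 * X 2 * X 3 * X 3 - X 0 * X 1 * X 2 * X 3)
            * (X 0 * X 2 + X 1 * X 3 + X 2 * X 4)
        + (- X 2 * X 2 * X 3 * X 3 + 2 * X 1 * X 2 * X 2 * X 3 - X 1 * X 1 * X 2 * X 2)
            * (X 0 * X 4 + X 1 * X 5 + X 3 * X 5) from by ring]
      exact hJ _ _ _ _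
    · refine ⟨2, ?_⟩
      rw [show (X 1 * X 4 : MvPolynomial (Fin 6) K) ^ 2 =
        (- X 3 * X 4 - X 1 * X 4 - X 0 * X 3 - X 0 * X 1) * (X 2 * X 5)
        + (X 1 * X 4) * (X 0 * X 3 + X 1 * X 4)
        + (X 3 * X 5 + X 1 * X 5) * (X 0 * X 2 + X 1 * X 3 + X 2 * X 4)
        + (- X 1 * X 3) * (X 0 * X 4 + X 1 * X 5 + X 3 * X 5) from by ring]
      exact hJ _ _ _ _
    · refine ⟨3, ?_⟩
      rw [show (X 1 * X 5 : MvPolynomial (Fin 6) K) ^ 3 =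
        (X 1 * X 4 * X 5 * X 5 + X 0 * X 1 * X 5 * X 5 - X 0 * X 0 * X 4 * X 5
          - X 0 * X 0 * X 0 * X 5) * (X 2 * X 5)
        + (- X 0 * X 1 * X 5 * X 5) * (X 0 * X 3 + X 1 * X 4)
        + (- X 1 * X 5 * X 5 * X 5 + X 0 * X 0 * X 5 * X 5)
            * (X 0 * X 2 + X 1 * X 3 + X 2 * X 4)
        + (X 1 * X 1 * X 5 * X 5) * (X 0 * X 4 + X 1 * X 5 + X 3 * X 5) from by ring]
      exact hJ _ _ _ _
    · refine ⟨3, ?_⟩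
      rw [show (X 2 * X 4 : MvPolynomial (Fin 6) K) ^ 3 =
        (- X 2 * X 3 * X 3 * X 3 - 2 * X 1 * X 2 * X 3 * X 3 - X 1 * X 1 * X 2 * X 3
          - X 0 * X 2 * X 2 * X 3 - X 0 * X 1 * X 2 * X 2) * (X 2 * X 5)
        + (- X 2 * X 2 * X 3 * X 4) * (X 0 * X 3 + X 1 * X 4)
        + (X 2 * X 2 * X 4 * X 4 - X 0 * X 2 * X 2 * X 4)
            * (X 0 * X 2 + X 1 * X 3 + X 2 * X 4)
        + (X 2 * X 2 * X 3 * X 3 + X 1 * X 2 * X 2 * X 3 + X 0 * X 2 * X 2 * X 2)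
            * (X 0 * X 4 + X 1 * X 5 + X 3 * X 5) from by ring]
      exact hJ _ _ _ _
    · exact ⟨1, by rw [pow_one]; exact m1⟩
    · refine ⟨3, ?_⟩
      rw [show (X 3 * X 5 : MvPolynomial (Fin 6) K) ^ 3 =
        (- X 4 * X 4 * X 4 * X 5 + X 3 * X 4 * X 5 * X 5 - X 0 * X 4 * X 4 * X 5
          + X 0 * X 3 * X 5 * X 5) * (X 2 * X 5)
        + (- X 3 * X 4 * X 5 * X 5) * (X 0 * X 3 + X 1 * X 4)
        + (X 4 * X 4 * X 5 * X 5 - X 3 * X 5 * X 5 * X 5)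
            * (X 0 * X 2 + X 1 * X 3 + X 2 * X 4)
        + (X 3 * X 3 * X 5 * X 5) * (X 0 * X 4 + X 1 * X 5 + X 3 * X 5) from by ring]
      exact hJ _ _ _ _
  · -- radical J ≤ I : J ≤ I and I is radical
    have hJI : Ideal.span ({X 2 * X 5,
        X 0 * X 3 + X 1 * X 4, X 0 * X 2 + X 1 * X 3 + X 2 * X 4,
        X 0 * X 4 + X 1 * X 5 + X 3 * X 5} : Set (MvPolynomial (Fin 6) K)) ≤
        Ideal.span ({X 0 * X 2, X 0 * X 3, X 0 * X 4, X 1 * X 3, X 1 * X 4, X 1 * X 5,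
        X 2 * X 4, X 2 * X 5, X 3 * X 5} : Set (MvPolynomial (Fin 6) K)) := by
      rw [Ideal.span_le]
      intro x hx
      simp only [Set.mem_insert_iff, Set.mem_singleton_iff] at hx
      have g02 : (X 0 * X 2 : MvPolynomial (Fin 6) K) ∈ Ideal.span ({X 0 * X 2, X 0 * X 3,
          X 0 * X 4, X 1 * X 3, X 1 * X 4, X 1 * X 5, X 2 * X 4, X 2 * X 5, X 3 * X 5} :
          Set (MvPolynomial (Fin 6) K)) := Ideal.subset_span (by simp)
      have g03 : (X 0 * X 3 : MvPolynomial (Fin 6) K) ∈ Ideal.span ({X 0 * X 2, X 0 * X 3,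
          X 0 * X 4, X 1 * X 3, X 1 * X 4, X 1 * X 5, X 2 * X 4, X 2 * X 5, X 3 * X 5} :
          Set (MvPolynomial (Fin 6) K)) := Ideal.subset_span (by simp)
      have g04 : (X 0 * X 4 : MvPolynomial (Fin 6) K) ∈ Ideal.span ({X 0 * X 2, X 0 * X 3,
          X 0 * X 4, X 1 * X 3, X 1 * X 4, X 1 * X 5, X 2 * X 4, X 2 * X 5, X 3 * X 5} :
          Set (MvPolynomial (Fin 6) K)) := Ideal.subset_span (by simp)
      have g13 : (X 1 * X 3 : MvPolynomial (Fin 6) K) ∈ Ideal.span ({X 0 * X 2, X 0 * X 3,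
          X 0 * X 4, X 1 * X 3, X 1 * X 4, X 1 * X 5, X 2 * X 4, X 2 * X 5, X 3 * X 5} :
          Set (MvPolynomial (Fin 6) K)) := Ideal.subset_span (by simp)
      have g14 : (X 1 * X 4 : MvPolynomial (Fin 6) K) ∈ Ideal.span ({X 0 * X 2, X 0 * X 3,
          X 0 * X 4, X 1 * X 3, X 1 * X 4, X 1 * X 5, X 2 * X 4, X 2 * X 5, X 3 * X 5} :
          Set (MvPolynomial (Fin 6) K)) := Ideal.subset_span (by simp)
      have g15 : (X 1 * X 5 : MvPolynomial (Fin 6) K) ∈ Ideal.span ({X 0 * X 2, X 0 * X 3,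
          X 0 * X 4, X 1 * X 3, X 1 * X 4, X 1 * X 5, X 2 * X 4, X 2 * X 5, X 3 * X 5} :
          Set (MvPolynomial (Fin 6) K)) := Ideal.subset_span (by simp)
      have g24 : (X 2 * X 4 : MvPolynomial (Fin 6) K) ∈ Ideal.span ({X 0 * X 2, X 0 * X 3,
          X 0 * X 4, X 1 * X 3, X 1 * X 4, X 1 * X 5, X 2 * X 4, X 2 * X 5, X 3 * X 5} :
          Set (MvPolynomial (Fin 6) K)) := Ideal.subset_span (by simp)
      have g25 : (X 2 * X 5 : MvPolynomial (Fin 6) K) ∈ Ideal.span ({X 0 * X 2, X 0 * X 3,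
          X 0 * X 4, X 1 * X 3, X 1 * X 4, X 1 * X 5, X 2 * X 4, X 2 * X 5, X 3 * X 5} :
          Set (MvPolynomial (Fin 6) K)) := Ideal.subset_span (by simp)
      have g35 : (X 3 * X 5 : MvPolynomial (Fin 6) K) ∈ Ideal.span ({X 0 * X 2, X 0 * X 3,
          X 0 * X 4, X 1 * X 3, X 1 * X 4, X 1 * X 5, X 2 * X 4, X 2 * X 5, X 3 * X 5} :
          Set (MvPolynomial (Fin 6) K)) := Ideal.subset_span (by simp)
      rcases hx with rfl | rfl | rfl | rfl
      · exact g25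
      · exact add_mem g03 g14
      · exact add_mem (add_mem g02 g13) g24
      · exact add_mem (add_mem g04 g15) g35
    have key : ∀ S : Finset (Fin 6),
        ((0 : Fin 6) ∈ S ∨ (2 : Fin 6) ∈ S) → ((0 : Fin 6) ∈ S ∨ (3 : Fin 6) ∈ S) →
        ((0 : Fin 6) ∈ S ∨ (4 : Fin 6) ∈ S) → ((1 : Fin 6) ∈ S ∨ (3 : Fin 6) ∈ S) →
        ((1 : Fin 6) ∈ S ∨ (4 : Fin 6) ∈ S) → ((1 : Fin 6) ∈ S ∨ (5 : Fin 6) ∈ S) →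
        ((2 : Fin 6) ∈ S ∨ (4 : Fin 6) ∈ S) → ((2 : Fin 6) ∈ S ∨ (5 : Fin 6) ∈ S) →
        ((3 : Fin 6) ∈ S ∨ (5 : Fin 6) ∈ S) →
        Ideal.span ({X 0 * X 2, X 0 * X 3, X 0 * X 4, X 1 * X 3, X 1 * X 4, X 1 * X 5,
          X 2 * X 4, X 2 * X 5, X 3 * X 5} : Set (MvPolynomial (Fin 6) K)) ≤
          Ideal.span (X '' (↑S : Set (Fin 6))) := by
      intro S h1 h2 h3 h4 h5 h6 h7 h8 h9
      rw [Ideal.span_le]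
      intro x hx
      simp only [Set.mem_insert_iff, Set.mem_singleton_iff] at hx
      rcases hx with rfl | rfl | rfl | rfl | rfl | rfl | rfl | rfl | rfl
      exacts [BT_pairmem h1, BT_pairmem h2, BT_pairmem h3, BT_pairmem h4, BT_pairmem h5,
        BT_pairmem h6, BT_pairmem h7, BT_pairmem h8, BT_pairmem h9]
    have hP1 := key ({2, 3, 4, 5} : Finset (Fin 6)) (by decide) (by decide) (by decide)
      (by decide) (by decide) (by decide) (by decide) (by decide) (by decide)
    have hP2 := key ({0, 3, 4, 5} : Finset (Fin 6)) (by decide) (by decide) (by decide)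
      (by decide) (by decide) (by decide) (by decide) (by decide) (by decide)
    have hP3 := key ({0, 1, 4, 5} : Finset (Fin 6)) (by decide) (by decide) (by decide)
      (by decide) (by decide) (by decide) (by decide) (by decide) (by decide)
    have hP4 := key ({0, 1, 2, 5} : Finset (Fin 6)) (by decide) (by decide) (by decide)
      (by decide) (by decide) (by decide) (by decide) (by decide) (by decide)
    have hP5 := key ({0, 1, 2, 3} : Finset (Fin 6)) (by decide) (by decide) (by decide)
      (by decide) (by decide) (by decide) (by decide) (by decide) (by decide)
    have hP6 := key ({1, 2, 3, 4} : Finset (Fin 6)) (by decide) (by decide) (by decide)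
      (by decide) (by decide) (by decide) (by decide) (by decide) (by decide)
    have hI : Ideal.span ({X 0 * X 2, X 0 * X 3, X 0 * X 4, X 1 * X 3, X 1 * X 4, X 1 * X 5,
        X 2 * X 4, X 2 * X 5, X 3 * X 5} : Set (MvPolynomial (Fin 6) K)) =
        Ideal.span ((fun s => monomial s (1 : K)) ''
          ({Finsupp.single 0 1 + Finsupp.single 2 1, Finsupp.single 0 1 + Finsupp.single 3 1,
            Finsupp.single 0 1 + Finsupp.single 4 1, Finsupp.single 1 1 + Finsupp.single 3 1,
            Finsupp.single 1 1 + Finsupp.single 4 1, Finsupp.single 1 1 + Finsupp.single 5 1,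
            Finsupp.single 2 1 + Finsupp.single 4 1, Finsupp.single 2 1 + Finsupp.single 5 1,
            Finsupp.single 3 1 + Finsupp.single 5 1} : Set (Fin 6 →₀ ℕ))) := by
      simp only [Set.image_insert_eq, Set.image_singleton, BT_XX]
    have hIrad : (Ideal.span ({X 0 * X 2, X 0 * X 3, X 0 * X 4, X 1 * X 3, X 1 * X 4, X 1 * X 5,
        X 2 * X 4, X 2 * X 5, X 3 * X 5} : Set (MvPolynomial (Fin 6) K))).radical =
        Ideal.span ({X 0 * X 2, X 0 * X 3, X 0 * X 4, X 1 * X 3, X 1 * X 4, X 1 * X 5,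
        X 2 * X 4, X 2 * X 5, X 3 * X 5} : Set (MvPolynomial (Fin 6) K)) := by
      refine le_antisymm ?_ Ideal.le_radical
      intro f hf
      rw [Ideal.mem_radical_iff] at hf
      obtain ⟨n, hfn⟩ := hf
      have f1 : f ∈ Ideal.span (X '' (↑({2, 3, 4, 5} : Finset (Fin 6)) : Set (Fin 6))) :=
        (BT_span_X_isPrime _).mem_of_pow_mem n (hP1 hfn)
      have f2 : f ∈ Ideal.span (X '' (↑({0, 3, 4, 5} : Finset (Fin 6)) : Set (Fin 6))) :=
        (BT_span_X_isPrime _).mem_of_pow_mem n (hP2 hfn)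
      have f3 : f ∈ Ideal.span (X '' (↑({0, 1, 4, 5} : Finset (Fin 6)) : Set (Fin 6))) :=
        (BT_span_X_isPrime _).mem_of_pow_mem n (hP3 hfn)
      have f4 : f ∈ Ideal.span (X '' (↑({0, 1, 2, 5} : Finset (Fin 6)) : Set (Fin 6))) :=
        (BT_span_X_isPrime _).mem_of_pow_mem n (hP4 hfn)
      have f5 : f ∈ Ideal.span (X '' (↑({0, 1, 2, 3} : Finset (Fin 6)) : Set (Fin 6))) :=
        (BT_span_X_isPrime _).mem_of_pow_mem n (hP5 hfn)
      have f6 : f ∈ Ideal.span (X '' (↑({1, 2, 3, 4} : Finset (Fin 6)) : Set (Fin 6))) :=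
        (BT_span_X_isPrime _).mem_of_pow_mem n (hP6 hfn)
      rw [mem_ideal_span_X_image] at f1 f2 f3 f4 f5 f6
      rw [hI, mem_ideal_span_monomial_image]
      intro m hm
      have c1 : (decide (m 2 ≠ 0) || decide (m 3 ≠ 0) || decide (m 4 ≠ 0)
          || decide (m 5 ≠ 0)) = true := by
        obtain ⟨i, hi, hne⟩ := f1 m hm
        rw [Finset.mem_coe] at hi
        fin_cases hi <;> simp [hne]
      have c2 : (decide (m 0 ≠ 0) || decide (m 3 ≠ 0) || decide (m 4 ≠ 0)
          || decide (m 5 ≠ 0)) = true := by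
        obtain ⟨i, hi, hne⟩ := f2 m hm
        rw [Finset.mem_coe] at hi
        fin_cases hi <;> simp [hne]
      have c3 : (decide (m 0 ≠ 0) || decide (m 1 ≠ 0) || decide (m 4 ≠ 0)
          || decide (m 5 ≠ 0)) = true := by
        obtain ⟨i, hi, hne⟩ := f3 m hm
        rw [Finset.mem_coe] at hi
        fin_cases hi <;> simp [hne]
      have c4 : (decide (m 0 ≠ 0) || decide (m 1 ≠ 0) || decide (m 2 ≠ 0)
          || decide (m 5 ≠ 0)) = true := by
        obtain ⟨i, hi, hne⟩ := f4 m hm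
        rw [Finset.mem_coe] at hi
        fin_cases hi <;> simp [hne]
      have c5 : (decide (m 0 ≠ 0) || decide (m 1 ≠ 0) || decide (m 2 ≠ 0)
          || decide (m 3 ≠ 0)) = true := by
        obtain ⟨i, hi, hne⟩ := f5 m hm
        rw [Finset.mem_coe] at hi
        fin_cases hi <;> simp [hne]
      have c6 : (decide (m 1 ≠ 0) || decide (m 2 ≠ 0) || decide (m 3 ≠ 0)
          || decide (m 4 ≠ 0)) = true := by
        obtain ⟨i, hi, hne⟩ := f6 m hm
        rw [Finset.mem_coe] at hi
        fin_cases hi <;> simp [hne]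
      have hcomb := BT_comb (fun i => decide (m i ≠ 0)) c1 c2 c3 c4 c5 c6
      simp only [Bool.or_eq_true, Bool.and_eq_true, decide_eq_true_eq] at hcomb
      rcases hcomb with ((((((((⟨ha, hb⟩ | ⟨ha, hb⟩) | ⟨ha, hb⟩) | ⟨ha, hb⟩) | ⟨ha, hb⟩) |
        ⟨ha, hb⟩) | ⟨ha, hb⟩) | ⟨ha, hb⟩) | ⟨ha, hb⟩)
      · exact ⟨_, Set.mem_insert _ _, BT_pair_le (by decide) ha hb⟩
      · exact ⟨_, Set.mem_insert_of_mem _ (Set.mem_insert _ _),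
          BT_pair_le (by decide) ha hb⟩
      · exact ⟨_, Set.mem_insert_of_mem _ (Set.mem_insert_of_mem _ (Set.mem_insert _ _)),
          BT_pair_le (by decide) ha hb⟩
      · exact ⟨_, Set.mem_insert_of_mem _ (Set.mem_insert_of_mem _ (Set.mem_insert_of_mem _
          (Set.mem_insert _ _))), BT_pair_le (by decide) ha hb⟩
      · exact ⟨_, Set.mem_insert_of_mem _ (Set.mem_insert_of_mem _ (Set.mem_insert_of_mem _
          (Set.mem_insert_of_mem _ (Set.mem_insert _ _)))), BT_pair_le (by decide) ha hb⟩
      · exact ⟨_, Set.mem_insert_of_mem _ (Set.mem_insert_of_mem _ (Set.mem_insert_of_mem _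
          (Set.mem_insert_of_mem _ (Set.mem_insert_of_mem _ (Set.mem_insert _ _))))),
          BT_pair_le (by decide) ha hb⟩
      · exact ⟨_, Set.mem_insert_of_mem _ (Set.mem_insert_of_mem _ (Set.mem_insert_of_mem _
          (Set.mem_insert_of_mem _ (Set.mem_insert_of_mem _ (Set.mem_insert_of_mem _
          (Set.mem_insert _ _)))))), BT_pair_le (by decide) ha hb⟩
      · exact ⟨_, Set.mem_insert_of_mem _ (Set.mem_insert_of_mem _ (Set.mem_insert_of_mem _
          (Set.mem_insert_of_mem _ (Set.mem_insert_of_mem _ (Set.mem_insert_of_mem _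
          (Set.mem_insert_of_mem _ (Set.mem_insert _ _))))))), BT_pair_le (by decide) ha hb⟩
      · exact ⟨_, Set.mem_insert_of_mem _ (Set.mem_insert_of_mem _ (Set.mem_insert_of_mem _
          (Set.mem_insert_of_mem _ (Set.mem_insert_of_mem _ (Set.mem_insert_of_mem _
          (Set.mem_insert_of_mem _ (Set.mem_insert_of_mem _ rfl))))))),
          BT_pair_le (by decide) ha hb⟩
    calc (Ideal.span ({X 2 * X 5,
        X 0 * X 3 + X 1 * X 4, X 0 * X 2 + X 1 * X 3 + X 2 * X 4,
        X 0 * X 4 + X 1 * X 5 + X 3 * X 5} : Set (MvPolynomial (Fin 6) K))).radical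
        ≤ (Ideal.span ({X 0 * X 2, X 0 * X 3, X 0 * X 4, X 1 * X 3, X 1 * X 4, X 1 * X 5,
        X 2 * X 4, X 2 * X 5, X 3 * X 5} : Set (MvPolynomial (Fin 6) K))).radical :=
          Ideal.radical_mono hJI
      _ = _ := hIrad
end

section
/- Let K be an algebraically closed field and R = K[x1,…,x6]. Let I be the ideal of R generated by the monomials x1x3, x1x4, x2x4, x3x5, x3x6, x4x6, x1x2x5, x1x2x6, x1x5x6, x2x5x6. Then I equals the radical of the ideal generated by the four polynomials x1x4, x3x6, x1x3 + x2x4 + x1x2x5, x3x5 + x4x6 + x1x2x6 + x1x5x6 + x2x5x6. -/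
open MvPolynomial Finsupp

section Aux

variable {σ : Type*} {K : Type*} [Field K]

private lemma barile_sub_aeval_mem (S : Set σ) [DecidablePred (· ∈ S)] (f : MvPolynomial σ K) :
    f - aeval (fun i => if i ∈ S then 0 else X i) f ∈
      Ideal.span (X '' S : Set (MvPolynomial σ K)) := by
  induction f using MvPolynomial.induction_on with
  | C a => simp
  | add p q hp hq => rw [map_add]; convert Ideal.add_mem _ hp hq using 1; ring
  | mul_X p i hp =>
      rw [map_mul, aeval_X]
      by_cases hi : i ∈ S
      · rw [if_pos hi, mul_zero, sub_zero]
        exact Ideal.mul_mem_left _ p (Ideal.subset_span ⟨i, hi, rfl⟩)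
      · rw [if_neg hi]
        have : p * X i - aeval (fun i => if i ∈ S then 0 else X i) p * X i
            = (p - aeval (fun i => if i ∈ S then 0 else X i) p) * X i := by ring
        rw [this]
        exact Ideal.mul_mem_right _ _ hp

private lemma barile_span_X_isRadical (S : Set σ) :
    (Ideal.span (X '' S : Set (MvPolynomial σ K))).IsRadical := by
  classical
  set φ : MvPolynomial σ K →ₐ[K] MvPolynomial σ K :=
    aeval (fun i => if i ∈ S then 0 else X i) with hφ
  have hker : Ideal.span (X '' S : Set (MvPolynomial σ K)) ≤
      RingHom.ker (φ : MvPolynomial σ K →+* MvPolynomial σ K) := by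
    rw [Ideal.span_le]
    rintro _ ⟨i, hi, rfl⟩
    simp [φ, RingHom.mem_ker, if_pos hi]
  rintro f ⟨n, hfn⟩
  have h1 : φ f ^ n = 0 := by
    have := hker hfn
    rwa [RingHom.mem_ker, map_pow] at this
  rcases eq_or_ne n 0 with rfl | hn
  · rw [pow_zero] at h1; exact absurd h1 one_ne_zero
  have h2 : φ f = 0 := pow_eq_zero_iff hn |>.mp h1
  have h3 := barile_sub_aeval_mem S f
  rw [← hφ] at h3
  rwa [h2, sub_zero] at h3

private lemma barile_pair_le {a b : Fin 6} (hab : a ≠ b) (m : Fin 6 →₀ ℕ) :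
    Finsupp.single a 1 + Finsupp.single b 1 ≤ m ↔ m a ≠ 0 ∧ m b ≠ 0 := by
  rw [Finsupp.le_def]
  constructor
  · intro h
    have ha := h a; have hb := h b
    simp [Finsupp.single_apply, hab, hab.symm] at ha hb
    omega
  · rintro ⟨ha, hb⟩ i
    simp only [Finsupp.add_apply, Finsupp.single_apply]
    split_ifs <;> first | (subst_vars; omega) | (exfalso; subst_vars; simp_all)

private lemma barile_triple_le {a b c : Fin 6} (hab : a ≠ b) (hac : a ≠ c) (hbc : b ≠ c)
    (m : Fin 6 →₀ ℕ) :
    Finsupp.single a 1 + Finsupp.single b 1 + Finsupp.single c 1 ≤ m ↔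
      m a ≠ 0 ∧ m b ≠ 0 ∧ m c ≠ 0 := by
  rw [Finsupp.le_def]
  constructor
  · intro h
    have ha := h a; have hb := h b; have hc := h c
    simp [Finsupp.single_apply, hab, hab.symm, hac, hac.symm, hbc, hbc.symm] at ha hb hc
    omega
  · rintro ⟨ha, hb, hc⟩ i
    simp only [Finsupp.add_apply, Finsupp.single_apply]
    split_ifs <;> first | (subst_vars; omega) | (exfalso; subst_vars; simp_all)

private lemma barile_key_bool : ∀ b0 b1 b2 b3 b4 b5 : Bool,
    (((b2 || (b3 || (b4 || b5))) = true) ∧ ((b1 || (b2 || (b3 || b5))) = true) ∧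
     ((b1 || (b2 || (b3 || b4))) = true) ∧ ((b0 || (b3 || (b4 || b5))) = true) ∧
     ((b0 || (b2 || (b3 || b5))) = true) ∧ ((b0 || (b2 || (b3 || b4))) = true) ∧
     ((b0 || (b1 || (b4 || b5))) = true) ∧ ((b0 || (b1 || (b2 || b5))) = true) ∧
     ((b0 || (b1 || (b2 || b3))) = true)) ↔
    ((b0 && b2) || ((b0 && b3) || ((b1 && b3) || ((b2 && b4) || ((b2 && b5) || ((b3 && b5) ||
     ((b0 && (b1 && b4)) || ((b0 && (b1 && b5)) || ((b0 && (b4 && b5)) ||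
      (b1 && (b4 && b5))))))))))) = true := by
  decide

private lemma barile_key_iff (P0 P1 P2 P3 P4 P5 : Prop) :
    ((P2 ∨ P3 ∨ P4 ∨ P5) ∧ (P1 ∨ P2 ∨ P3 ∨ P5) ∧ (P1 ∨ P2 ∨ P3 ∨ P4) ∧
     (P0 ∨ P3 ∨ P4 ∨ P5) ∧ (P0 ∨ P2 ∨ P3 ∨ P5) ∧ (P0 ∨ P2 ∨ P3 ∨ P4) ∧
     (P0 ∨ P1 ∨ P4 ∨ P5) ∧ (P0 ∨ P1 ∨ P2 ∨ P5) ∧ (P0 ∨ P1 ∨ P2 ∨ P3)) ↔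
    ((P0 ∧ P2) ∨ (P0 ∧ P3) ∨ (P1 ∧ P3) ∨ (P2 ∧ P4) ∨ (P2 ∧ P5) ∨ (P3 ∧ P5) ∨
     (P0 ∧ P1 ∧ P4) ∨ (P0 ∧ P1 ∧ P5) ∨ (P0 ∧ P4 ∧ P5) ∨ (P1 ∧ P4 ∧ P5)) := by
  classical
  have H := barile_key_bool (decide P0) (decide P1) (decide P2) (decide P3) (decide P4) (decide P5)
  simpa only [Bool.or_eq_true, Bool.and_eq_true, decide_eq_true_eq] using H

private lemma barile_monomial_pair (a b : Fin 6) :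
    (monomial (Finsupp.single a 1 + Finsupp.single b 1) (1 : K) : MvPolynomial (Fin 6) K)
      = X a * X b := by
  rw [X, X, monomial_mul, one_mul]

private lemma barile_monomial_triple (a b c : Fin 6) :
    (monomial (Finsupp.single a 1 + Finsupp.single b 1 + Finsupp.single c 1) (1 : K) :
      MvPolynomial (Fin 6) K) = X a * X b * X c := by
  rw [X, X, X, monomial_mul, monomial_mul, one_mul, one_mul]

end Aux

section Main

variable (K : Type*) [Field K]

private lemma barile_I_eq_inf :
    Ideal.span ({X 0 * X 2, X 0 * X 3, X 1 * X 3, X 2 * X 4, X 2 * X 5, X 3 * X 5, X 0 * X 1 * X 4, X 0 * X 1 * X 5, X 0 * X 4 * X 5, X 1 * X 4 * X 5} :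
        Set (MvPolynomial (Fin 6) K)) = Ideal.span (X '' ({2,3,4,5} : Set (Fin 6)) : Set (MvPolynomial (Fin 6) K)) ⊓ Ideal.span (X '' ({1,2,3,5} : Set (Fin 6)) : Set (MvPolynomial (Fin 6) K)) ⊓ Ideal.span (X '' ({1,2,3,4} : Set (Fin 6)) : Set (MvPolynomial (Fin 6) K)) ⊓ Ideal.span (X '' ({0,3,4,5} : Set (Fin 6)) : Set (MvPolynomial (Fin 6) K)) ⊓ Ideal.span (X '' ({0,2,3,5} : Set (Fin 6)) : Set (MvPolynomial (Fin 6) K)) ⊓ Ideal.span (X '' ({0,2,3,4} : Set (Fin 6)) : Set (MvPolynomial (Fin 6) K)) ⊓ Ideal.span (X '' ({0,1,4,5} : Set (Fin 6)) : Set (MvPolynomial (Fin 6) K)) ⊓ Ideal.span (X '' ({0,1,2,5} : Set (Fin 6)) : Set (MvPolynomial (Fin 6) K)) ⊓ Ideal.span (X '' ({0,1,2,3} : Set (Fin 6)) : Set (MvPolynomial (Fin 6) K)) := by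
  classical
  have hIm : ({X 0 * X 2, X 0 * X 3, X 1 * X 3, X 2 * X 4, X 2 * X 5, X 3 * X 5, X 0 * X 1 * X 4, X 0 * X 1 * X 5, X 0 * X 4 * X 5, X 1 * X 4 * X 5} :
      Set (MvPolynomial (Fin 6) K)) =
      (fun s => monomial s (1 : K)) '' ({Finsupp.single 0 1 + Finsupp.single 2 1, Finsupp.single 0 1 + Finsupp.single 3 1, Finsupp.single 1 1 + Finsupp.single 3 1, Finsupp.single 2 1 + Finsupp.single 4 1, Finsupp.single 2 1 + Finsupp.single 5 1, Finsupp.single 3 1 + Finsupp.single 5 1, Finsupp.single 0 1 + Finsupp.single 1 1 + Finsupp.single 4 1, Finsupp.single 0 1 + Finsupp.single 1 1 + Finsupp.single 5 1, Finsupp.single 0 1 + Finsupp.single 4 1 + Finsupp.single 5 1, Finsupp.single 1 1 + Finsupp.single 4 1 + Finsupp.single 5 1} : Set (Fin 6 →₀ ℕ)) := by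
    simp only [Set.image_insert_eq, Set.image_singleton, barile_monomial_pair,
      barile_monomial_triple]
  rw [hIm]
  ext f
  simp only [Ideal.mem_inf, mem_ideal_span_monomial_image, mem_ideal_span_X_image,
    ← forall_and, ← imp_and]
  refine forall_congr' fun m => imp_congr_right fun _ => ?_
  have hG : (∃ g ∈ ({Finsupp.single 0 1 + Finsupp.single 2 1, Finsupp.single 0 1 + Finsupp.single 3 1, Finsupp.single 1 1 + Finsupp.single 3 1, Finsupp.single 2 1 + Finsupp.single 4 1, Finsupp.single 2 1 + Finsupp.single 5 1, Finsupp.single 3 1 + Finsupp.single 5 1, Finsupp.single 0 1 + Finsupp.single 1 1 + Finsupp.single 4 1, Finsupp.single 0 1 + Finsupp.single 1 1 + Finsupp.single 5 1, Finsupp.single 0 1 + Finsupp.single 4 1 + Finsupp.single 5 1, Finsupp.single 1 1 + Finsupp.single 4 1 + Finsupp.single 5 1} : Set (Fin 6 →₀ ℕ)), g ≤ m) ↔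
      ((m 0 ≠ 0 ∧ m 2 ≠ 0) ∨ (m 0 ≠ 0 ∧ m 3 ≠ 0) ∨ (m 1 ≠ 0 ∧ m 3 ≠ 0) ∨
       (m 2 ≠ 0 ∧ m 4 ≠ 0) ∨ (m 2 ≠ 0 ∧ m 5 ≠ 0) ∨ (m 3 ≠ 0 ∧ m 5 ≠ 0) ∨
       (m 0 ≠ 0 ∧ m 1 ≠ 0 ∧ m 4 ≠ 0) ∨ (m 0 ≠ 0 ∧ m 1 ≠ 0 ∧ m 5 ≠ 0) ∨
       (m 0 ≠ 0 ∧ m 4 ≠ 0 ∧ m 5 ≠ 0) ∨ (m 1 ≠ 0 ∧ m 4 ≠ 0 ∧ m 5 ≠ 0)) := by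
    simp only [Set.mem_insert_iff, Set.mem_singleton_iff, exists_eq_or_imp, exists_eq_left]
    rw [barile_pair_le (by decide), barile_pair_le (by decide), barile_pair_le (by decide),
      barile_pair_le (by decide), barile_pair_le (by decide), barile_pair_le (by decide),
      barile_triple_le (by decide) (by decide) (by decide),
      barile_triple_le (by decide) (by decide) (by decide),
      barile_triple_le (by decide) (by decide) (by decide),
      barile_triple_le (by decide) (by decide) (by decide)]
  rw [hG]
  have hS1 : (∃ i ∈ ({2,3,4,5} : Set (Fin 6)), m i ≠ 0) ↔ (m 2 ≠ 0 ∨ m 3 ≠ 0 ∨ m 4 ≠ 0 ∨ m 5 ≠ 0) := by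
    simp only [Set.mem_insert_iff, Set.mem_singleton_iff, exists_eq_or_imp, exists_eq_left]
  have hS2 : (∃ i ∈ ({1,2,3,5} : Set (Fin 6)), m i ≠ 0) ↔ (m 1 ≠ 0 ∨ m 2 ≠ 0 ∨ m 3 ≠ 0 ∨ m 5 ≠ 0) := by
    simp only [Set.mem_insert_iff, Set.mem_singleton_iff, exists_eq_or_imp, exists_eq_left]
  have hS3 : (∃ i ∈ ({1,2,3,4} : Set (Fin 6)), m i ≠ 0) ↔ (m 1 ≠ 0 ∨ m 2 ≠ 0 ∨ m 3 ≠ 0 ∨ m 4 ≠ 0) := by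
    simp only [Set.mem_insert_iff, Set.mem_singleton_iff, exists_eq_or_imp, exists_eq_left]
  have hS4 : (∃ i ∈ ({0,3,4,5} : Set (Fin 6)), m i ≠ 0) ↔ (m 0 ≠ 0 ∨ m 3 ≠ 0 ∨ m 4 ≠ 0 ∨ m 5 ≠ 0) := by
    simp only [Set.mem_insert_iff, Set.mem_singleton_iff, exists_eq_or_imp, exists_eq_left]
  have hS5 : (∃ i ∈ ({0,2,3,5} : Set (Fin 6)), m i ≠ 0) ↔ (m 0 ≠ 0 ∨ m 2 ≠ 0 ∨ m 3 ≠ 0 ∨ m 5 ≠ 0) := by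
    simp only [Set.mem_insert_iff, Set.mem_singleton_iff, exists_eq_or_imp, exists_eq_left]
  have hS6 : (∃ i ∈ ({0,2,3,4} : Set (Fin 6)), m i ≠ 0) ↔ (m 0 ≠ 0 ∨ m 2 ≠ 0 ∨ m 3 ≠ 0 ∨ m 4 ≠ 0) := by
    simp only [Set.mem_insert_iff, Set.mem_singleton_iff, exists_eq_or_imp, exists_eq_left]
  have hS7 : (∃ i ∈ ({0,1,4,5} : Set (Fin 6)), m i ≠ 0) ↔ (m 0 ≠ 0 ∨ m 1 ≠ 0 ∨ m 4 ≠ 0 ∨ m 5 ≠ 0) := by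
    simp only [Set.mem_insert_iff, Set.mem_singleton_iff, exists_eq_or_imp, exists_eq_left]
  have hS8 : (∃ i ∈ ({0,1,2,5} : Set (Fin 6)), m i ≠ 0) ↔ (m 0 ≠ 0 ∨ m 1 ≠ 0 ∨ m 2 ≠ 0 ∨ m 5 ≠ 0) := by
    simp only [Set.mem_insert_iff, Set.mem_singleton_iff, exists_eq_or_imp, exists_eq_left]
  have hS9 : (∃ i ∈ ({0,1,2,3} : Set (Fin 6)), m i ≠ 0) ↔ (m 0 ≠ 0 ∨ m 1 ≠ 0 ∨ m 2 ≠ 0 ∨ m 3 ≠ 0) := by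
    simp only [Set.mem_insert_iff, Set.mem_singleton_iff, exists_eq_or_imp, exists_eq_left]
  rw [hS1, hS2, hS3, hS4, hS5, hS6, hS7, hS8, hS9]
  simp only [and_assoc]
  exact (barile_key_iff (m 0 ≠ 0) (m 1 ≠ 0) (m 2 ≠ 0) (m 3 ≠ 0) (m 4 ≠ 0) (m 5 ≠ 0)).symm

set_option maxHeartbeats 2000000 in
private lemma barile_I_isRadical :
    (Ideal.span ({X 0 * X 2, X 0 * X 3, X 1 * X 3, X 2 * X 4, X 2 * X 5, X 3 * X 5, X 0 * X 1 * X 4, X 0 * X 1 * X 5, X 0 * X 4 * X 5, X 1 * X 4 * X 5} :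
        Set (MvPolynomial (Fin 6) K))).IsRadical := by
  rw [barile_I_eq_inf]
  exact ((((((((barile_span_X_isRadical _).inf (barile_span_X_isRadical _)).inf
    (barile_span_X_isRadical _)).inf (barile_span_X_isRadical _)).inf
    (barile_span_X_isRadical _)).inf (barile_span_X_isRadical _)).inf
    (barile_span_X_isRadical _)).inf (barile_span_X_isRadical _)).inf
    (barile_span_X_isRadical _)

end Main

set_option maxHeartbeats 4000000 in
/-- **Example 9 (Barile).** Let `K` be algebraically closed and `R = K[x₁,…,x₆]`.
The ideal `I = (x₁x₃, x₁x₄, x₂x₄, x₃x₅, x₃x₆, x₄x₆, x₁x₂x₅, x₁x₂x₆, x₁x₅x₆, x₂x₅x₆)`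
satisfies `I = √(x₁x₄, x₃x₆, x₁x₃ + x₂x₄ + x₁x₂x₅, x₃x₅ + x₄x₆ + x₁x₂x₆ + x₁x₅x₆ + x₂x₅x₆)`.
(The variables `x₁,…,x₆` are `X 0, …, X 5`.) -/
theorem example9_eq_radical_four (K : Type*) [Field K] [IsAlgClosed K] :
    Ideal.span ({X 0 * X 2, X 0 * X 3, X 1 * X 3, X 2 * X 4, X 2 * X 5, X 3 * X 5,
        X 0 * X 1 * X 4, X 0 * X 1 * X 5, X 0 * X 4 * X 5, X 1 * X 4 * X 5} :
        Set (MvPolynomial (Fin 6) K)) =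
      (Ideal.span ({X 0 * X 3, X 2 * X 5,
        X 0 * X 2 + X 1 * X 3 + X 0 * X 1 * X 4,
        X 2 * X 4 + X 3 * X 5 + X 0 * X 1 * X 5 + X 0 * X 4 * X 5 + X 1 * X 4 * X 5} :
        Set (MvPolynomial (Fin 6) K))).radical := by
  refine le_antisymm ?_ ?_
  · rw [Ideal.span_le]
    rintro p hp
    simp only [Set.mem_insert_iff, Set.mem_singleton_iff] at hp
    rcases hp with rfl | rfl | rfl | rfl | rfl | rfl | rfl | rfl | rfl | rfl
    · refine ⟨3, ?_⟩
      have hrep : (X 0 * X 2 : MvPolynomial (Fin 6) K) ^ 3 =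
          (-X 0*X 1*X 2*X 2 - X 1*X 1*X 1*X 3*X 5 - X 0*X 1*X 2*X 4*X 4 + X 0*X 1*X 1*X 3*X 5 + X 0*X 1*X 1*X 2*X 4 - X 0*X 1*X 1*X 4*X 4*X 5 + X 0*X 0*X 1*X 1*X 1*X 5) * (X 0 * X 3) + (-X 0*X 0*X 1*X 1*X 3 + X 0*X 0*X 0*X 3*X 4 + X 0*X 0*X 0*X 1*X 3 + X 0*X 0*X 0*X 1*X 1*X 4 + X 0*X 0*X 0*X 0*X 1*X 4 + X 0*X 0*X 0*X 0*X 1*X 1) * (X 2 * X 5) + (X 0*X 0*X 2*X 2 + X 0*X 1*X 1*X 3*X 5 - X 0*X 0*X 3*X 4*X 5 - X 0*X 0*X 1*X 3*X 5 - X 0*X 0*X 1*X 2*X 4 - X 0*X 0*X 1*X 1*X 4*X 5 - X 0*X 0*X 0*X 1*X 4*X 5 - X 0*X 0*X 0*X 1*X 1*X 5) * (X 0 * X 2 + X 1 * X 3 + X 0 * X 1 * X 4) + (X 0*X 0*X 1*X 3*X 4 + X 0*X 0*X 0*X 1*X 1*X 4) * (X 2 * X 4 + X 3 * X 5 + X 0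 * X 1 * X 5 + X 0 * X 4 * X 5 + X 1 * X 4 * X 5) := by ring
      rw [hrep]
      exact add_mem (add_mem (add_mem
        (Ideal.mul_mem_left _ _ (Ideal.subset_span (by simp)))
        (Ideal.mul_mem_left _ _ (Ideal.subset_span (by simp))))
        (Ideal.mul_mem_left _ _ (Ideal.subset_span (by simp))))
        (Ideal.mul_mem_left _ _ (Ideal.subset_span (by simp)))
    · exact Ideal.le_radical (Ideal.subset_span (by simp))
    · refine ⟨2, ?_⟩
      have hrep : (X 1 * X 3 : MvPolynomial (Fin 6) K) ^ 2 =
          (-X 1*X 2 - X 1*X 1*X 4) * (X 0 * X 3) + (0) * (X 2 * X 5) + (X 1*X 3) * (X 0 * X 2 + X 1 * X 3 + X 0 * X 1 * X 4) + (0) * (X 2 * X 4 + X 3 * X 5 + X 0 * X 1 * X 5 + X 0 * X 4 * X 5 + X 1 * X 4 * X 5) := by ring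
      rw [hrep]
      exact add_mem (add_mem (add_mem
        (Ideal.mul_mem_left _ _ (Ideal.subset_span (by simp)))
        (Ideal.mul_mem_left _ _ (Ideal.subset_span (by simp))))
        (Ideal.mul_mem_left _ _ (Ideal.subset_span (by simp))))
        (Ideal.mul_mem_left _ _ (Ideal.subset_span (by simp)))
    · refine ⟨2, ?_⟩
      have hrep : (X 2 * X 4 : MvPolynomial (Fin 6) K) ^ 2 =
          (0) * (X 0 * X 3) + (-X 3*X 4 + X 1*X 3 + X 0*X 2 - X 1*X 4*X 4 - X 0*X 4*X 4) * (X 2 * X 5) + (-X 2*X 5) * (X 0 * X 2 + X 1 * X 3 + X 0 * X 1 * X 4) + (X 2*X 4) * (X 2 * X 4 + X 3 * X 5 + X 0 * X 1 * X 5 + X 0 * X 4 * X 5 + X 1 * X 4 * X 5) := by ring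
      rw [hrep]
      exact add_mem (add_mem (add_mem
        (Ideal.mul_mem_left _ _ (Ideal.subset_span (by simp)))
        (Ideal.mul_mem_left _ _ (Ideal.subset_span (by simp))))
        (Ideal.mul_mem_left _ _ (Ideal.subset_span (by simp))))
        (Ideal.mul_mem_left _ _ (Ideal.subset_span (by simp)))
    · exact Ideal.le_radical (Ideal.subset_span (by simp))
    · refine ⟨3, ?_⟩
      have hrep : (X 3 * X 5 : MvPolynomial (Fin 6) K) ^ 3 =
          (-X 3*X 4*X 5*X 5*X 5 - X 1*X 3*X 5*X 5*X 5 + X 1*X 4*X 4*X 5*X 5*X 5) * (X 0 * X 3) + (-X 3*X 3*X 4*X 5 + X 0*X 3*X 4*X 5*X 5) * (X 2 * X 5) + (-X 3*X 4*X 5*X 5*X 5) * (X 0 * X 2 + X 1 * X 3 + X 0 * X 1 * X 4) + (X 3*X 3*X 5*X 5) * (X 2 * X 4 + X 3 * X 5 + X 0 * X 1 * X 5 + X 0 * X 4 * X 5 + X 1 * X 4 * X 5) := by ring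
      rw [hrep]
      exact add_mem (add_mem (add_mem
        (Ideal.mul_mem_left _ _ (Ideal.subset_span (by simp)))
        (Ideal.mul_mem_left _ _ (Ideal.subset_span (by simp))))
        (Ideal.mul_mem_left _ _ (Ideal.subset_span (by simp))))
        (Ideal.mul_mem_left _ _ (Ideal.subset_span (by simp)))
    · refine ⟨3, ?_⟩
      have hrep : (X 0 * X 1 * X 4 : MvPolynomial (Fin 6) K) ^ 3 =
          (X 1*X 1*X 1*X 3*X 5 + X 0*X 1*X 2*X 4*X 4 - X 0*X 1*X 1*X 3*X 5 + X 0*X 1*X 1*X 4*X 4*X 5 - X 0*X 1*X 1*X 1*X 4*X 4 - X 0*X 0*X 1*X 1*X 1*X 5) * (X 0 * X 3) + (X 0*X 0*X 1*X 1*X 3 - X 0*X 0*X 0*X 3*X 4 - X 0*X 0*X 0*X 1*X 3 - X 0*X 0*X 0*X 1*X 1*X 4 - X 0*X 0*X 0*X 0*X 1*X 4 - X 0*X 0*X 0*X 0*X 1*X 1) * (X 2 * X 5) + (-X 0*X 1*X 1*X 3*X 5 + X 0*X 0*X 3*X 4*X 5 + X 0*X 0*X 1*X 3*X 5 + X 0*X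 0*X 1*X 1*X 4*X 5 + X 0*X 0*X 1*X 1*X 4*X 4 + X 0*X 0*X 0*X 1*X 4*X 5 + X 0*X 0*X 0*X 1*X 1*X 5) * (X 0 * X 2 + X 1 * X 3 + X 0 * X 1 * X 4) + (-X 0*X 0*X 1*X 3*X 4 - X 0*X 0*X 0*X 1*X 1*X 4) * (X 2 * X 4 + X 3 * X 5 + X 0 * X 1 * X 5 + X 0 * X 4 * X 5 + X 1 * X 4 * X 5) := by ring
      rw [hrep]
      exact add_mem (add_mem (add_mem
        (Ideal.mul_mem_left _ _ (Ideal.subset_span (by simp)))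
        (Ideal.mul_mem_left _ _ (Ideal.subset_span (by simp))))
        (Ideal.mul_mem_left _ _ (Ideal.subset_span (by simp))))
        (Ideal.mul_mem_left _ _ (Ideal.subset_span (by simp)))
    · refine ⟨3, ?_⟩
      have hrep : (X 0 * X 1 * X 5 : MvPolynomial (Fin 6) K) ^ 3 =
          (X 1*X 1*X 1*X 5*X 5*X 5) * (X 0 * X 3) + (X 0*X 0*X 1*X 1*X 5*X 5 - X 0*X 0*X 1*X 1*X 4*X 5 + X 0*X 0*X 0*X 1*X 5*X 5) * (X 2 * X 5) + (-X 0*X 1*X 1*X 5*X 5*X 5 - X 0*X 0*X 1*X 5*X 5*X 5) * (X 0 * X 2 + X 1 * X 3 + X 0 * X 1 * X 4) + (X 0*X 0*X 1*X 1*X 5*X 5) * (X 2 * X 4 + X 3 * X 5 + X 0 * X 1 * X 5 + X 0 * X 4 * X 5 + X 1 * X 4 * X 5) := by ring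
      rw [hrep]
      exact add_mem (add_mem (add_mem
        (Ideal.mul_mem_left _ _ (Ideal.subset_span (by simp)))
        (Ideal.mul_mem_left _ _ (Ideal.subset_span (by simp))))
        (Ideal.mul_mem_left _ _ (Ideal.subset_span (by simp))))
        (Ideal.mul_mem_left _ _ (Ideal.subset_span (by simp)))
    · refine ⟨3, ?_⟩
      have hrep : (X 0 * X 4 * X 5 : MvPolynomial (Fin 6) K) ^ 3 =
          (X 1*X 4*X 4*X 5*X 5*X 5 - X 0*X 4*X 4*X 5*X 5*X 5 + X 0*X 1*X 4*X 5*X 5*X 5) * (X 0 * X 3) + (X 0*X 0*X 4*X 4*X 5*X 5 - X 0*X 0*X 4*X 4*X 4*X 5 + X 0*X 0*X 0*X 4*X 5*X 5) * (X 2 * X 5) + (-X 0*X 4*X 4*X 5*X 5*X 5 - X 0*X 0*X 4*X 5*X 5*X 5) * (X 0 * X 2 + X 1 * X 3 + X 0 * X 1 * X 4) + (X 0*X 0*X 4*X 4*X 5*X 5) * (X 2 * X 4 + X 3 * X 5 + X 0 * X 1 * X 5 + X 0 * X 4 * X 5 + X 1 * X 4 * X 5) := by ring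
      rw [hrep]
      exact add_mem (add_mem (add_mem
        (Ideal.mul_mem_left _ _ (Ideal.subset_span (by simp)))
        (Ideal.mul_mem_left _ _ (Ideal.subset_span (by simp))))
        (Ideal.mul_mem_left _ _ (Ideal.subset_span (by simp))))
        (Ideal.mul_mem_left _ _ (Ideal.subset_span (by simp)))
    · refine ⟨3, ?_⟩
      have hrep : (X 1 * X 4 * X 5 : MvPolynomial (Fin 6) K) ^ 3 =
          (-X 1*X 1*X 1*X 5*X 5*X 5) * (X 0 * X 3) + (-X 1*X 1*X 3*X 4*X 5 - X 0*X 1*X 2*X 4*X 5 - X 1*X 1*X 4*X 4*X 4*X 5 + X 0*X 1*X 4*X 4*X 5*X 5 - X 0*X 0*X 1*X 4*X 5*X 5 - X 0*X 0*X 1*X 1*X 5*X 5) * (X 2 * X 5) + (X 1*X 2*X 4*X 5*X 5 - X 1*X 4*X 4*X 5*X 5*X 5 + X 0*X 1*X 4*X 5*X 5*X 5 + X 0*X 1*X 1*X 5*X 5*X 5) * (X 0 * X 2 + X 1 * X 3 + X 0 * X 1 * X 4) + (X 1*X 1*X 4*X 4*X 5*X 5 - X 0*X 1*X 1*X 4*X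 5*X 5) * (X 2 * X 4 + X 3 * X 5 + X 0 * X 1 * X 5 + X 0 * X 4 * X 5 + X 1 * X 4 * X 5) := by ring
      rw [hrep]
      exact add_mem (add_mem (add_mem
        (Ideal.mul_mem_left _ _ (Ideal.subset_span (by simp)))
        (Ideal.mul_mem_left _ _ (Ideal.subset_span (by simp))))
        (Ideal.mul_mem_left _ _ (Ideal.subset_span (by simp))))
        (Ideal.mul_mem_left _ _ (Ideal.subset_span (by simp)))
  · rw [(barile_I_isRadical K).radical_le_iff, Ideal.span_le]
    rintro p hp
    simp only [Set.mem_insert_iff, Set.mem_singleton_iff] at hp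
    rcases hp with rfl | rfl | rfl | rfl
    · exact Ideal.subset_span (by simp)
    · exact Ideal.subset_span (by simp)
    · exact add_mem (add_mem (Ideal.subset_span (by simp)) (Ideal.subset_span (by simp)))
        (Ideal.subset_span (by simp))
    · exact add_mem (add_mem (add_mem (add_mem (Ideal.subset_span (by simp))
        (Ideal.subset_span (by simp))) (Ideal.subset_span (by simp)))
        (Ideal.subset_span (by simp))) (Ideal.subset_span (by simp))
end
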